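/- arXiv:1908.01904 — 8 statements merged into one kernel-verified Lean document; each statement's English description precedes it below -/
import Mathlib

section
/- The continuous functions ℤ_p → ℤ_p form a ring isomorphic to the p-adic completion of ℤ_p[α_0, α_1, …]/(α_i^p − α_i), where α_i(a) is the i-th Teichmüller digit of a; in particular, for each n, Maps_cts(ℤ_p, ℤ/p^n) ≅ ℤ/p^n[α_0, …]/(α_i^p − α_i). -/
open MvPolynomial Finset

/-- We equip `ZMod m` with the discrete topology. -/
instance zmodTopologicalSpace (m : ℕ) : TopologicalSpace (ZMod m) := ⊥

instance zmodDiscreteTopology (m : ℕ) : DiscreteTopology (ZMod m) := ⟨rfl⟩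

/-- A polynomial of degree less than the size of a set of points with pairwise unit
differences, vanishing at all those points, is zero. -/
lemma poly_eq_zero_of_eval {R : Type*} [CommRing R] (s : Finset R)
    (hu : ∀ a ∈ s, ∀ b ∈ s, a ≠ b → IsUnit (a - b)) :
    ∀ f : Polynomial R, f.degree < s.card → (∀ a ∈ s, f.eval a = 0) → f = 0 := by
  classical
  induction s using Finset.induction with
  | empty =>
    intro f hd _
    rw [Finset.card_empty, Nat.cast_zero] at hd
    exact Polynomial.degree_eq_bot.mp (Nat.WithBot.lt_zero_iff.mp hd)
  | @insert t s' ht ih =>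
    intro f hd hev
    nontriviality R
    have hroot : f.eval t = 0 := hev t (Finset.mem_insert_self _ _)
    obtain ⟨g, hg⟩ := (Polynomial.dvd_iff_isRoot.mpr hroot)
    by_cases hg0 : g = 0
    · rw [hg, hg0, mul_zero]
    · exfalso
      have hdeg : f.degree = g.degree + 1 := by
        rw [hg, mul_comm, (Polynomial.monic_X_sub_C t).degree_mul, Polynomial.degree_X_sub_C]
      have hglt : g.degree < s'.card := by
        rw [Finset.card_insert_of_notMem ht, Nat.cast_add, Nat.cast_one, hdeg] at hd
        exact (WithBot.add_lt_add_iff_right (by simp : (1 : WithBot ℕ) ≠ ⊥)).mp hd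
      have hgev : ∀ a ∈ s', g.eval a = 0 := by
        intro a ha
        have hne : a ≠ t := fun h => ht (h ▸ ha)
        have hunit : IsUnit (a - t) :=
          hu a (Finset.mem_insert_of_mem ha) t (Finset.mem_insert_self _ _) hne
        have := hev a (Finset.mem_insert_of_mem ha)
        rw [hg, Polynomial.eval_mul, Polynomial.eval_sub, Polynomial.eval_X,
          Polynomial.eval_C] at this
        exact (IsUnit.mul_right_eq_zero hunit).mp this
      exact hg0 (ih (fun a ha b hb => hu a (Finset.mem_insert_of_mem ha) b
        (Finset.mem_insert_of_mem hb)) g hglt hgev)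

lemma finSuccEquiv_symm_C {R : Type*} [CommRing R] (m : ℕ) (a : MvPolynomial (Fin m) R) :
    (finSuccEquiv R m).symm (Polynomial.C a) = rename Fin.succ a := by
  have key : (finSuccEquiv R m).toAlgHom.comp (rename Fin.succ : MvPolynomial (Fin m) R →ₐ[R] _)
      = Polynomial.CAlgHom.comp (AlgHom.id R _) := by
    apply algHom_ext
    intro i
    simp [Polynomial.CAlgHom, finSuccEquiv_X_succ]
  have : finSuccEquiv R m (rename Fin.succ a) = Polynomial.C a := by
    have := congrArg (fun f => f a) (congrArg (fun (f : _ →ₐ[R] _) => f.toFun) key)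
    simpa [Polynomial.CAlgHom] using this
  rw [← this, AlgEquiv.symm_apply_apply]

lemma mv_mem_span_of_eval_zero {R : Type*} [CommRing R] (k : ℕ) (hk : 2 ≤ k) (T : Finset R)
    (hcard : T.card = k)
    (hu : ∀ a ∈ T, ∀ b ∈ T, a ≠ b → IsUnit (a - b))
    (hTpow : ∀ t ∈ T, t ^ k = t) :
    ∀ (m : ℕ) (q : MvPolynomial (Fin m) R),
      (∀ x : Fin m → R, (∀ i, x i ∈ T) → eval x q = 0) →
      q ∈ Ideal.span (Set.range fun i : Fin m => (X i : MvPolynomial (Fin m) R) ^ k - X i) := by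
  classical
  have hnt : Nontrivial R := by
    obtain ⟨a, ha, b, hb, hab⟩ := Finset.one_lt_card.mp (by omega : 1 < T.card)
    exact ⟨⟨a, b, hab⟩⟩
  intro m
  induction m with
  | zero =>
    intro q h
    obtain ⟨a, rfl⟩ := C_surjective (Fin 0) q
    have := h (fun i => i.elim0) (fun i => i.elim0)
    rw [eval_C] at this
    rw [this, map_zero]
    exact Ideal.zero_mem _
  | succ m ih =>
    intro q h
    set e := finSuccEquiv R m with he
    set F : Polynomial (MvPolynomial (Fin m) R) := e q with hF
    set d : Polynomial (MvPolynomial (Fin m) R) := Polynomial.X ^ k - Polynomial.X with hdd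
    have hd : d.Monic := by
      apply Polynomial.monic_X_pow_sub
      rw [Polynomial.degree_X]
      exact_mod_cast by omega
    set r : Polynomial (MvPolynomial (Fin m) R) := F %ₘ d with hr
    have hqeq : q = (X 0 ^ k - X 0) * e.symm (F /ₘ d) + e.symm r := by
      have h1 : e.symm F = q := by rw [hF, AlgEquiv.symm_apply_apply]
      have h2 : e.symm d = X 0 ^ k - X 0 := by
        have hX : e.symm Polynomial.X = X 0 := by
          rw [← finSuccEquiv_X_zero (R := R) (n := m), AlgEquiv.symm_apply_apply]
        rw [hdd, map_sub, map_pow, hX]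
      calc q = e.symm (r + d * (F /ₘ d)) := by rw [Polynomial.modByMonic_add_div F d, h1]
        _ = (X 0 ^ k - X 0) * e.symm (F /ₘ d) + e.symm r := by
            rw [map_add, map_mul, h2]; ring
    -- the remainder has degree < k in Polynomial.X
    have hrdeg : r.degree < (k : WithBot ℕ) := by
      have h1 : r.degree < d.degree := Polynomial.degree_modByMonic_lt F hd
      have h2 : d.degree ≤ (k : WithBot ℕ) := by
        apply le_trans (Polynomial.degree_sub_le _ _)
        simp [Polynomial.degree_X_pow, Polynomial.degree_X]
        exact_mod_cast by omega
      exact lt_of_lt_of_le h1 h2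
    -- each coefficient of r vanishes on T-points
    have hcoeff : ∀ j : ℕ, ∀ x : Fin m → R, (∀ i, x i ∈ T) → eval x (r.coeff j) = 0 := by
      intro j x hx
      set G : Polynomial R := r.map (eval x) with hG
      have hGev : ∀ t ∈ T, G.eval t = 0 := by
        intro t ht
        have hcons : ∀ i : Fin (m + 1), (Fin.cons t x : Fin (m+1) → R) i ∈ T := by
          intro i
          refine Fin.cases ?_ ?_ i
          · simpa using ht
          · intro j; simpa using hx j
        have h0 : eval (Fin.cons t x) q = 0 := h _ hcons
        have h2 : eval (Fin.cons t x) (e.symm r) =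
            Polynomial.eval t (Polynomial.map (eval x) (e (e.symm r))) :=
          eval_eq_eval_mv_eval' x t (e.symm r)
        rw [AlgEquiv.apply_symm_apply] at h2
        have h3 : eval (Fin.cons t x) ((X 0 ^ k - X 0) * e.symm (F /ₘ d)) = 0 := by
          rw [map_mul]
          have : eval (Fin.cons t x) (X 0 ^ k - X 0 : MvPolynomial (Fin (m+1)) R) = 0 := by
            rw [map_sub, map_pow, eval_X, Fin.cons_zero, hTpow t ht, sub_self]
          rw [this, zero_mul]
        have := congrArg (eval (Fin.cons t x)) hqeq
        rw [h0, map_add, h3, zero_add, h2] at this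
        exact this.symm
      have hGdeg : G.degree < (T.card : WithBot ℕ) := by
        rw [hcard]
        exact lt_of_le_of_lt (Polynomial.degree_map_le) hrdeg
      have hG0 : G = 0 := poly_eq_zero_of_eval T hu G hGdeg hGev
      have := congrArg (fun q => Polynomial.coeff q j) hG0
      simpa [hG, Polynomial.coeff_map] using this
    -- hence each coefficient lies in the span (over Fin m), and transfer by rename
    have hrmem : e.symm r ∈
        Ideal.span (Set.range fun i : Fin (m+1) => (X i : MvPolynomial (Fin (m+1)) R) ^ k - X i) := by
      have hrsum : e.symm r = ∑ j ∈ r.support, rename Fin.succ (r.coeff j) * X 0 ^ j := by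
        conv_lhs => rw [r.as_sum_support]
        rw [map_sum]
        congr 1
        ext j
        rw [← Polynomial.C_mul_X_pow_eq_monomial, map_mul, map_pow, finSuccEquiv_symm_C]
        congr 1
        rw [← finSuccEquiv_X_zero (R := R) (n := m), AlgEquiv.symm_apply_apply]
      rw [hrsum]
      apply Ideal.sum_mem
      intro j hj
      apply Ideal.mul_mem_right
      have hmem : r.coeff j ∈
          Ideal.span (Set.range fun i : Fin m => (X i : MvPolynomial (Fin m) R) ^ k - X i) :=
        ih (r.coeff j) (hcoeff j)
      have : rename Fin.succ (r.coeff j) ∈ Ideal.map (rename (R := R) (Fin.succ)).toRingHom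
          (Ideal.span (Set.range fun i : Fin m => (X i : MvPolynomial (Fin m) R) ^ k - X i)) :=
        Ideal.mem_map_of_mem _ hmem
      rw [Ideal.map_span] at this
      refine Ideal.span_mono ?_ this
      rintro _ ⟨_, ⟨i, rfl⟩, rfl⟩
      exact ⟨i.succ, by simp⟩
    rw [hqeq]
    refine Ideal.add_mem _ ?_ hrmem
    exact Ideal.mul_mem_right _ _ (Ideal.subset_span ⟨0, rfl⟩)

lemma mem_span_of_eval_zero {R : Type*} [CommRing R] (k : ℕ) (hk : 2 ≤ k) (T : Finset R)
    (hcard : T.card = k)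
    (hu : ∀ a ∈ T, ∀ b ∈ T, a ≠ b → IsUnit (a - b))
    (hTpow : ∀ t ∈ T, t ^ k = t)
    (q : MvPolynomial ℕ R)
    (h : ∀ x : ℕ → R, (∀ i, x i ∈ T) → eval x q = 0) :
    q ∈ Ideal.span (Set.range fun i : ℕ => (X i : MvPolynomial ℕ R) ^ k - X i) := by
  classical
  obtain ⟨t₀, ht₀⟩ := Finset.card_pos.mp (by omega : 0 < T.card)
  obtain ⟨m, f, hf, q', rfl⟩ := exists_fin_rename q
  have hq' : ∀ y : Fin m → R, (∀ i, y i ∈ T) → eval y q' = 0 := by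
    intro y hy
    set x : ℕ → R := Function.extend f y (fun _ => t₀) with hx
    have hxy : x ∘ f = y := by
      funext j
      simp [hx, hf.extend_apply]
    have hxT : ∀ i, x i ∈ T := by
      intro i
      by_cases hi : ∃ j, f j = i
      · obtain ⟨j, rfl⟩ := hi
        rw [hx, hf.extend_apply]
        exact hy j
      · rw [hx, Function.extend_apply' _ _ _ hi]
        exact ht₀
    have := h x hxT
    rwa [eval_rename, hxy] at this
  have hmem := mv_mem_span_of_eval_zero k hk T hcard hu hTpow m q' hq'
  have : rename f q' ∈ Ideal.map (rename (R := R) f).toRingHom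
      (Ideal.span (Set.range fun i : Fin m => (X i : MvPolynomial (Fin m) R) ^ k - X i)) :=
    Ideal.mem_map_of_mem _ hmem
  rw [Ideal.map_span] at this
  refine Ideal.span_mono ?_ this
  rintro _ ⟨_, ⟨i, rfl⟩, rfl⟩
  exact ⟨f i, by simp⟩

/-- Multivariate Lagrange interpolation at nodes with pairwise unit differences. -/
lemma exists_interpolation {R : Type*} [CommRing R] (k m : ℕ) (t : Fin k → R)
    (hu : ∀ j j' : Fin k, j ≠ j' → IsUnit (t j - t j'))
    (v : (Fin m → Fin k) → R) :
    ∃ q : MvPolynomial ℕ R, ∀ (x : ℕ → R) (y : Fin m → Fin k),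
      (∀ i : Fin m, x (i : ℕ) = t (y i)) → eval x q = v y := by
  classical
  -- the inverse of the Lagrange denominator
  have hud : ∀ j : Fin k, IsUnit (∏ j' ∈ Finset.univ.erase j, (t j - t j')) := by
    intro j
    refine Finset.prod_induction _ IsUnit (fun a b ha hb => ha.mul hb) isUnit_one ?_
    intro j' hj'
    exact hu j j' (fun h => (Finset.mem_erase.mp hj').1 h.symm)
  set w : Fin k → R := fun j => ↑(hud j).unit⁻¹ with hw
  have hw_mul : ∀ j : Fin k, w j * ∏ j' ∈ Finset.univ.erase j, (t j - t j') = 1 := by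
    intro j
    rw [hw]
    exact_mod_cast (hud j).val_inv_mul
  set B : Fin m → Fin k → MvPolynomial ℕ R := fun i j =>
    C (w j) * ∏ j' ∈ Finset.univ.erase j, (X (i : ℕ) - C (t j')) with hB
  refine ⟨∑ y : Fin m → Fin k, C (v y) * ∏ i : Fin m, B i (y i), ?_⟩
  intro x y₀ hx
  have hBev : ∀ (i : Fin m) (j : Fin k), eval x (B i j) = if j = y₀ i then 1 else 0 := by
    intro i j
    rw [hB]
    simp only [map_mul, eval_C, map_prod, map_sub, eval_X]
    by_cases hj : j = y₀ i
    · rw [if_pos hj]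
      have heq : ∀ j' ∈ Finset.univ.erase j, x (i : ℕ) - t j' = t j - t j' := by
        intro j' _; rw [hx i, hj]
      rw [Finset.prod_congr rfl heq, hw_mul]
    · rw [if_neg hj]
      have hmem : y₀ i ∈ Finset.univ.erase j := Finset.mem_erase.mpr ⟨fun h => hj h.symm,
        Finset.mem_univ _⟩
      rw [Finset.prod_eq_zero hmem (by rw [hx i, sub_self]), mul_zero]
  rw [map_sum]
  rw [Finset.sum_eq_single y₀]
  · simp only [map_mul, eval_C, map_prod, hBev]
    simp
  · intro y _ hy
    obtain ⟨i, hi⟩ := Function.ne_iff.mp hy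
    simp only [map_mul, eval_C, map_prod, hBev]
    rw [Finset.prod_eq_zero (Finset.mem_univ i) (by rw [if_neg hi]), mul_zero]
  · intro hy₀
    exact absurd (Finset.mem_univ y₀) hy₀

section Padic

variable {p : ℕ} [hp : Fact p.Prime]

lemma norm_hasSum_le {f : ℕ → ℤ_[p]} {s : ℤ_[p]} (h : HasSum f s) {c : ℝ} (hc : 0 ≤ c)
    (hf : ∀ i, ‖f i‖ ≤ c) : ‖s‖ ≤ c := by
  classical
  have hfin : ∀ F : Finset ℕ, ‖∑ i ∈ F, f i‖ ≤ c := by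
    intro F
    induction F using Finset.induction with
    | empty => simpa using hc
    | @insert a F ha ih =>
      rw [Finset.sum_insert ha]
      exact le_trans (PadicInt.nonarchimedean _ _) (max_le (hf a) ih)
  have ht : Filter.Tendsto (fun n => ‖∑ i ∈ Finset.range n, f i‖) Filter.atTop (nhds ‖s‖) :=
    (h.tendsto_sum_nat).norm
  exact le_of_tendsto' ht (fun n => hfin _)

lemma pcast_ne_zero : ((p : ℤ_[p]) : ℤ_[p]) ≠ 0 := by
  intro h
  have := PadicInt.norm_p (p := p)
  rw [h, norm_zero] at this
  have hp1 : (1 : ℝ) < p := by exact_mod_cast hp.1.one_lt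
  have : (p : ℝ)⁻¹ > 0 := by positivity
  simp [← ‹(0:ℝ) = _›] at this

/-- Two roots of `X^p - X` in `ℤ_p` that are congruent mod `p` are equal. -/
lemma teich_unique {c d : ℤ_[p]} (hc : c ^ p = c) (hd : d ^ p = d)
    (h : (p : ℤ_[p]) ∣ c - d) : c = d := by
  set S : ℤ_[p] := ∑ i ∈ Finset.range p, c ^ i * d ^ (p - 1 - i) with hS
  have hgeom : S * (c - d) = c - d := by
    rw [hS, geom_sum₂_mul, hc, hd]
  have hdvdS : (p : ℤ_[p]) ∣ S := by
    have h1 : (p : ℤ_[p]) ∣ S - ∑ i ∈ Finset.range p, c ^ i * c ^ (p - 1 - i) := by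
      rw [hS, ← Finset.sum_sub_distrib]
      apply Finset.dvd_sum
      intro i _
      have : c ^ i * d ^ (p - 1 - i) - c ^ i * c ^ (p - 1 - i)
          = c ^ i * (d ^ (p - 1 - i) - c ^ (p - 1 - i)) := by ring
      rw [this]
      exact Dvd.dvd.mul_left (dvd_trans (dvd_sub_comm.mp h) (sub_dvd_pow_sub_pow d c _)) _
    have h2 : (p : ℤ_[p]) ∣ ∑ i ∈ Finset.range p, c ^ i * c ^ (p - 1 - i) := by
      have heq : ∀ i ∈ Finset.range p, c ^ i * c ^ (p - 1 - i) = c ^ (p - 1) := by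
        intro i hi
        rw [← pow_add]
        congr 1
        have := Finset.mem_range.mp hi
        omega
      rw [Finset.sum_congr rfl heq, Finset.sum_const, Finset.card_range, nsmul_eq_mul]
      exact Dvd.dvd.mul_right (dvd_refl _) _
    have := dvd_add h1 h2
    rwa [sub_add_cancel] at this
  have hSnorm : ‖S‖ < 1 := by
    obtain ⟨S', hS'⟩ := hdvdS
    rw [hS']
    calc ‖(p : ℤ_[p]) * S'‖ = ‖(p : ℤ_[p])‖ * ‖S'‖ := norm_mul _ _
      _ ≤ ‖(p : ℤ_[p])‖ * 1 := by
          apply mul_le_mul_of_nonneg_left (PadicInt.norm_le_one _) (norm_nonneg _)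
      _ = (p : ℝ)⁻¹ := by rw [mul_one, PadicInt.norm_p]
      _ < 1 := by
          rw [inv_lt_one_iff₀]
          right
          exact_mod_cast hp.1.one_lt
  have hunit : IsUnit (S - 1) := by
    rw [PadicInt.isUnit_iff]
    have hne : ‖S‖ ≠ ‖(-1 : ℤ_[p])‖ := by
      rw [norm_neg, norm_one]
      exact ne_of_lt hSnorm
    rw [sub_eq_add_neg, PadicInt.norm_add_eq_max_of_ne hne, norm_neg, norm_one]
    exact max_eq_right hSnorm.le
  have hzero : (c - d) * (S - 1) = 0 := by
    have : (c - d) * (S - 1) = S * (c - d) - (c - d) := by ring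
    rw [this, hgeom, sub_self]
  have := (IsUnit.mul_left_eq_zero hunit).mp hzero
  exact sub_eq_zero.mp this

end Padic

section Digits

variable {p : ℕ} [hp : Fact p.Prime]
variable (α : ℕ → C(ℤ_[p], ℤ_[p]))
variable (hpow : ∀ (i : ℕ) (a : ℤ_[p]), (α i a) ^ p = α i a)
variable (hsum : ∀ a : ℤ_[p], HasSum (fun i : ℕ => α i a * (p : ℤ_[p]) ^ i) a)


lemma norm_term_le (c : ℤ_[p]) (i m : ℕ) (h : m ≤ i) :
    ‖c * (p : ℤ_[p]) ^ i‖ ≤ (p : ℝ) ^ (-(m : ℤ)) := by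
  calc ‖c * (p : ℤ_[p]) ^ i‖ = ‖c‖ * ‖(p : ℤ_[p]) ^ i‖ := norm_mul _ _
    _ ≤ 1 * ‖(p : ℤ_[p]) ^ i‖ :=
        mul_le_mul_of_nonneg_right (PadicInt.norm_le_one _) (norm_nonneg _)
    _ = (p : ℝ) ^ (-(i : ℤ)) := by rw [one_mul, PadicInt.norm_p_pow]
    _ ≤ (p : ℝ) ^ (-(m : ℤ)) := by
        apply zpow_le_zpow_right₀
        · exact_mod_cast hp.1.one_lt.le
        · omega

include hsum in
lemma digit_tail (a : ℤ_[p]) (m : ℕ) :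
    ‖a - ∑ i ∈ Finset.range m, α i a * (p : ℤ_[p]) ^ i‖ ≤ (p : ℝ) ^ (-(m : ℤ)) := by
  have h := (hasSum_nat_add_iff' (f := fun i : ℕ => α i a * (p : ℤ_[p]) ^ i) m).mpr (hsum a)
  apply norm_hasSum_le h (by positivity)
  intro i
  exact norm_term_le _ _ _ (by omega)

include hpow hsum in
lemma digits_unique {c : ℕ → ℤ_[p]} (hcpow : ∀ i, c i ^ p = c i) {a : ℤ_[p]}
    (h : HasSum (fun i : ℕ => c i * (p : ℤ_[p]) ^ i) a) : ∀ i, α i a = c i := by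
  intro i
  induction i using Nat.strong_induction_on with
  | _ i ih =>
  set d : ℕ → ℤ_[p] := fun n => α n a * (p : ℤ_[p]) ^ n - c n * (p : ℤ_[p]) ^ n with hdd
  have hd0 : HasSum d 0 := by
    have := (hsum a).sub h
    simpa [hdd, sub_self] using this
  have hdlow : ∀ j < i, d j = 0 := by
    intro j hj
    rw [hdd]
    simp [ih j hj]
  have htail := (hasSum_nat_add_iff' (f := d) (i + 1)).mpr hd0
  have hsumlow : ∑ j ∈ Finset.range (i + 1), d j = d i := by
    rw [Finset.sum_range_succ, Finset.sum_eq_zero (fun j hj => hdlow j (Finset.mem_range.mp hj)),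
      zero_add]
  rw [hsumlow] at htail
  have hnorm : ‖(0 : ℤ_[p]) - d i‖ ≤ (p : ℝ) ^ (-((i+1) : ℤ)) := by
    apply norm_hasSum_le htail (by positivity)
    intro n
    have : d (n + (i + 1)) = (α (n + (i+1)) a - c (n + (i+1))) * (p : ℤ_[p]) ^ (n + (i+1)) := by
      rw [hdd]; ring
    rw [this]
    exact_mod_cast norm_term_le _ _ (i+1) (by omega)
  rw [zero_sub, norm_neg] at hnorm
  have hmem : d i ∈ Ideal.span {(p : ℤ_[p]) ^ (i + 1)} := by
    rw [← PadicInt.norm_le_pow_iff_mem_span_pow]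
    exact_mod_cast hnorm
  rw [Ideal.mem_span_singleton] at hmem
  have hdvd : (p : ℤ_[p]) ∣ α i a - c i := by
    have h1 : (p : ℤ_[p]) ^ i * (p : ℤ_[p]) ∣ (α i a - c i) * (p : ℤ_[p]) ^ i := by
      have h2 : d i = (α i a - c i) * (p : ℤ_[p]) ^ i := by rw [hdd]; ring
      rw [← h2, ← pow_succ]
      exact_mod_cast hmem
    have this := h1
    rw [mul_comm ((p : ℤ_[p]) ^ i) _] at this
    exact (mul_dvd_mul_iff_right (pow_ne_zero i pcast_ne_zero)).mp
      (by rwa [mul_comm (α i a - c i) _] at this ⊢)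
  exact teich_unique (hpow i a) (hcpow i) hdvd

include hpow hsum in
lemma exists_realize (c : ℕ → ℤ_[p]) (hc : ∀ i, c i ^ p = c i) :
    ∃ a : ℤ_[p], ∀ i, α i a = c i := by
  have hsummable : Summable (fun i : ℕ => c i * (p : ℤ_[p]) ^ i) := by
    apply Summable.of_norm_bounded (g := fun i : ℕ => ((p : ℝ)⁻¹) ^ i)
    · apply summable_geometric_of_lt_one (by positivity)
      rw [inv_lt_one_iff₀]
      right
      exact_mod_cast hp.1.one_lt
    · intro i
      have h1 := norm_term_le (p := p) (c i) i i le_rfl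
      have h2 : ((p : ℝ)⁻¹) ^ i = (p : ℝ) ^ (-(i : ℤ)) := by
        rw [zpow_neg, ← inv_zpow, zpow_natCast]
      rw [h2]
      exact h1
  exact ⟨_, digits_unique α hpow hsum hc hsummable.hasSum⟩

end Digits


section Tei

variable {p : ℕ} [hp : Fact p.Prime]
variable (α : ℕ → C(ℤ_[p], ℤ_[p]))
variable (hpow : ∀ (i : ℕ) (a : ℤ_[p]), (α i a) ^ p = α i a)
variable (hsum : ∀ a : ℤ_[p], HasSum (fun i : ℕ => α i a * (p : ℤ_[p]) ^ i) a)


/-- The Teichmüller representatives, obtained as zeroth digits of `0, 1, …, p-1`. -/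
noncomputable def tei (j : Fin p) : ℤ_[p] := α 0 ((j : ℕ) : ℤ_[p])

include hsum in
lemma tei_mod (j : Fin p) : (p : ℤ_[p]) ∣ ((j : ℕ) : ℤ_[p]) - tei α j := by
  have h := digit_tail α hsum ((j : ℕ) : ℤ_[p]) 1
  rw [Finset.sum_range_one, pow_zero, mul_one] at h
  rw [← Ideal.mem_span_singleton]
  have h2 : Ideal.span {(p : ℤ_[p])} = Ideal.span {(p : ℤ_[p]) ^ 1} := by rw [pow_one]
  rw [h2, ← PadicInt.norm_le_pow_iff_mem_span_pow]
  exact_mod_cast h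

include hpow hsum in
lemma root_eq_tei {c : ℤ_[p]} (hc : c ^ p = c) : ∃ j : Fin p, tei α j = c := by
  have hlt := PadicInt.zmodRepr_lt_p c
  refine ⟨⟨PadicInt.zmodRepr c, hlt⟩, ?_⟩
  apply teich_unique (hpow 0 _) hc
  have h1 : (p : ℤ_[p]) ∣ c - (PadicInt.zmodRepr c : ℤ_[p]) := by
    rw [← Ideal.mem_span_singleton, ← PadicInt.maximalIdeal_eq_span_p]
    exact PadicInt.sub_zmodRepr_mem c
  have h2 := tei_mod α hsum ⟨PadicInt.zmodRepr c, hlt⟩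
  have h3 := dvd_add h2 h1
  rw [show ((((⟨PadicInt.zmodRepr c, hlt⟩ : Fin p) : ℕ)) : ℤ_[p]) -
    tei α ⟨PadicInt.zmodRepr c, hlt⟩ + (c - (PadicInt.zmodRepr c : ℤ_[p]))
    = c - tei α ⟨PadicInt.zmodRepr c, hlt⟩ by push_cast; ring] at h3
  rwa [dvd_sub_comm] at h3

include hsum in
lemma tei_sub_unit {j j' : Fin p} (h : j ≠ j') : IsUnit (tei α j - tei α j') := by
  rw [PadicInt.isUnit_iff]
  refine le_antisymm (PadicInt.norm_le_one _) ?_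
  by_contra hlt
  push_neg at hlt
  have hlt1 : (p : ℤ_[p]) ∣ tei α j - tei α j' := (PadicInt.norm_lt_one_iff_dvd _).mp hlt
  have hj := tei_mod α hsum j
  have hj' := tei_mod α hsum j'
  have hdvd : (p : ℤ_[p]) ∣ ((j : ℕ) : ℤ_[p]) - ((j' : ℕ) : ℤ_[p]) := by
    have := dvd_sub (dvd_add hj hlt1) hj'
    rw [show ((j : ℕ) : ℤ_[p]) - tei α j + (tei α j - tei α j')
      - (((j' : ℕ) : ℤ_[p]) - tei α j') = ((j : ℕ) : ℤ_[p]) - ((j' : ℕ) : ℤ_[p]) by ring] at this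
    exact this
  have hint : ((p : ℤ) ^ (1:ℕ)) ∣ ((j : ℕ) : ℤ) - ((j' : ℕ) : ℤ) := by
    rw [← PadicInt.norm_int_le_pow_iff_dvd]
    have hmem : (((j:ℕ):ℤ_[p]) - ((j':ℕ):ℤ_[p])) ∈ Ideal.span {(p : ℤ_[p]) ^ (1:ℕ)} := by
      rw [Ideal.mem_span_singleton, pow_one]
      exact hdvd
    have hle := (PadicInt.norm_le_pow_iff_mem_span_pow _ 1).mpr hmem
    have hcast : ((((j:ℕ):ℤ) - ((j':ℕ):ℤ) : ℤ) : ℤ_[p]) = ((j:ℕ):ℤ_[p]) - ((j':ℕ):ℤ_[p]) := by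
      push_cast
      ring
    rw [hcast]
    exact_mod_cast hle
  rw [pow_one] at hint
  have hz : ((j : ℕ) : ℤ) - ((j' : ℕ) : ℤ) = 0 := by
    apply Int.eq_zero_of_abs_lt_dvd hint
    have := j.2
    have := j'.2
    rw [abs_lt]
    omega
  apply h
  have : (j : ℕ) = (j' : ℕ) := by omega
  exact Fin.ext this



/-- Locally constant factorisation of a continuous map into a discrete space. -/
lemma loc_const {Y : Type*} [TopologicalSpace Y] [DiscreteTopology Y] (g : C(ℤ_[p], Y)) :
    ∃ m : ℕ, ∀ a b : ℤ_[p], ‖a - b‖ ≤ (p : ℝ) ^ (-(m : ℤ)) → g a = g b := by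
  have hcov : Set.univ ⊆ ⋃ c : Y, (⇑g ⁻¹' {c}) := by
    intro a _
    exact Set.mem_iUnion.mpr ⟨g a, rfl⟩
  obtain ⟨δ, hδ, hball⟩ := lebesgue_number_lemma_of_metric isCompact_univ
    (fun c : Y => g.continuous.isOpen_preimage _ (isOpen_discrete {c})) hcov
  obtain ⟨m, hm⟩ := PadicInt.exists_pow_neg_lt p hδ
  refine ⟨m, fun a b hab => ?_⟩
  obtain ⟨c, hc⟩ := hball a (Set.mem_univ a)
  have ha : a ∈ ⇑g ⁻¹' {c} := hc (Metric.mem_ball_self hδ)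
  have hb : b ∈ ⇑g ⁻¹' {c} := by
    apply hc
    rw [Metric.mem_ball, dist_eq_norm, norm_sub_rev]
    exact lt_of_le_of_lt hab hm
  rw [Set.mem_preimage, Set.mem_singleton_iff] at ha hb
  rw [ha, hb]

include hpow hsum in
/-- The digits of a finite digit sum. -/
lemma digits_of_finite_sum (m : ℕ) (c : ℕ → ℤ_[p]) (hc : ∀ i, c i ^ p = c i) :
    ∀ i, α i (∑ k ∈ Finset.range m, c k * (p : ℤ_[p]) ^ k)
      = if i < m then c i else 0 := by
  have hc'pow : ∀ i, (if i < m then c i else 0) ^ p = (if i < m then c i else 0) := by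
    intro i
    by_cases h : i < m
    · rw [if_pos h, hc i]
    · rw [if_neg h, zero_pow hp.1.ne_zero]
  have hsum' : HasSum (fun i : ℕ => (if i < m then c i else 0) * (p : ℤ_[p]) ^ i)
      (∑ k ∈ Finset.range m, c k * (p : ℤ_[p]) ^ k) := by
    have h1 : ∀ i ∉ Finset.range m, (if i < m then c i else 0) * (p : ℤ_[p]) ^ i = 0 := by
      intro i hi
      rw [if_neg (by simpa using hi), zero_mul]
    have h2 : HasSum (fun i : ℕ => (if i < m then c i else 0) * (p : ℤ_[p]) ^ i)
        (∑ i ∈ Finset.range m, (if i < m then c i else 0) * (p : ℤ_[p]) ^ i) :=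
      hasSum_sum_of_ne_finset_zero h1
    rwa [Finset.sum_congr rfl (fun i hi => by
      rw [if_pos (Finset.mem_range.mp hi)])] at h2
  exact digits_unique α hpow hsum hc'pow hsum'


end Tei
/-- The ring of continuous functions `ℤ_p → ℤ_p` is the `p`-adic completion of
`ℤ_p[α_0, α_1, …]/(α_i^p − α_i)`, where `α_i(a)` is the `i`-th Teichmüller digit of `a`
(characterized by `α_i(a)^p = α_i(a)` and `a = ∑_i α_i(a) pⁱ`).  This is expressed by saying
that the evaluation map `Φ : ℤ_p[α_0, α_1, …] → C(ℤ_p, ℤ_p)`, `X i ↦ α_i`, has dense range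
and kernel exactly the ideal `(α_i^p − α_i)`.  In particular, for each `n`, evaluation
identifies `Maps_cts(ℤ_p, ℤ/pⁿ)` with `ℤ/pⁿ[α_0, α_1, …]/(α_i^p − α_i)`: every continuous
function `ℤ_p → ℤ/pⁿ` is a polynomial in the digit functions (reduced mod `pⁿ`), and the
kernel of the evaluation map is again the ideal `(α_i^p − α_i)`. -/
theorem stmt_2 (p : ℕ) [Fact p.Prime]
    (α : ℕ → C(ℤ_[p], ℤ_[p]))
    (hpow : ∀ (i : ℕ) (a : ℤ_[p]), (α i a) ^ p = α i a)
    (hsum : ∀ a : ℤ_[p], HasSum (fun i : ℕ => α i a * (p : ℤ_[p]) ^ i) a) :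
    (DenseRange
        ⇑(MvPolynomial.aeval α : MvPolynomial ℕ ℤ_[p] →ₐ[ℤ_[p]] C(ℤ_[p], ℤ_[p])) ∧
      RingHom.ker
          (MvPolynomial.aeval α : MvPolynomial ℕ ℤ_[p] →ₐ[ℤ_[p]] C(ℤ_[p], ℤ_[p])).toRingHom =
        Ideal.span (Set.range fun i : ℕ => (X i : MvPolynomial ℕ ℤ_[p]) ^ p - X i)) ∧
    ∀ n : ℕ, 0 < n →
      (∀ g : C(ℤ_[p], ZMod (p ^ n)), ∃ q : MvPolynomial ℕ (ZMod (p ^ n)),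
          MvPolynomial.eval₂Hom (Pi.constRingHom ℤ_[p] (ZMod (p ^ n)))
            (fun i : ℕ => fun a : ℤ_[p] => PadicInt.toZModPow n (α i a)) q = ⇑g) ∧
      RingHom.ker
          (MvPolynomial.eval₂Hom (Pi.constRingHom ℤ_[p] (ZMod (p ^ n)))
            (fun i : ℕ => fun a : ℤ_[p] => PadicInt.toZModPow n (α i a))) =
        Ideal.span (Set.range fun i : ℕ => (X i : MvPolynomial ℕ (ZMod (p ^ n))) ^ p - X i) := by
  classical
  have hp := (inferInstance : Fact p.Prime)
  have hp2 : 2 ≤ p := hp.1.two_le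
  -- pointwise evaluation of `aeval α`
  have haeval : ∀ (q : MvPolynomial ℕ ℤ_[p]) (a : ℤ_[p]),
      (aeval α q) a = eval (fun i => α i a) q := by
    intro q a
    induction q using MvPolynomial.induction_on with
    | C r =>
      rw [aeval_C, eval_C, Algebra.algebraMap_eq_smul_one, ContinuousMap.smul_apply,
        ContinuousMap.one_apply, smul_eq_mul, mul_one]
    | add q1 q2 h1 h2 =>
      rw [map_add, map_add, ContinuousMap.add_apply, h1, h2]
    | mul_X q i hq =>
      rw [map_mul, map_mul, ContinuousMap.mul_apply, hq, aeval_X, eval_X]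
  have hdigit_tei : ∀ (i : ℕ) (a : ℤ_[p]), ∃ j : Fin p, tei α j = α i a :=
    fun i a => root_eq_tei α hpow hsum (hpow i a)
  -- the Teichmüller points in ℤ_p
  set T : Finset ℤ_[p] := Finset.image (tei α) Finset.univ with hT
  have htei_inj : Function.Injective (tei α) := by
    intro j j' h
    by_contra hne
    exact (tei_sub_unit α hsum hne).ne_zero (sub_eq_zero.mpr h)
  have hTcard : T.card = p := by
    rw [hT, Finset.card_image_of_injective _ htei_inj, Finset.card_univ, Fintype.card_fin]
  have hTu : ∀ a ∈ T, ∀ b ∈ T, a ≠ b → IsUnit (a - b) := by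
    rintro a ha b hb hab
    obtain ⟨j, -, rfl⟩ := Finset.mem_image.mp ha
    obtain ⟨j', -, rfl⟩ := Finset.mem_image.mp hb
    exact tei_sub_unit α hsum (fun h => hab (by rw [h]))
  have hTpow : ∀ t ∈ T, t ^ p = t := by
    rintro t ht
    obtain ⟨j, -, rfl⟩ := Finset.mem_image.mp ht
    exact hpow 0 _
  constructor
  · constructor
    · -- dense range
      rw [Metric.denseRange_iff]
      intro f ε hε
      have hucont := CompactSpace.uniformContinuous_of_continuous f.continuous
      rw [Metric.uniformContinuous_iff] at hucont
      obtain ⟨δ, hδ, hδf⟩ := hucont ε hε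
      obtain ⟨m, hm⟩ := PadicInt.exists_pow_neg_lt p hδ
      set v : (Fin m → Fin p) → ℤ_[p] :=
        fun y => f (∑ i : Fin m, tei α (y i) * (p : ℤ_[p]) ^ (i : ℕ)) with hv
      obtain ⟨q, hq⟩ := exists_interpolation p m (tei α)
        (fun j j' hjj => tei_sub_unit α hsum hjj) v
      refine ⟨q, ?_⟩
      rw [ContinuousMap.dist_lt_iff hε]
      intro a
      choose y hy using fun i : Fin m => hdigit_tei (i : ℕ) a
      have heval : (aeval α q) a = v y := by
        rw [haeval]
        exact hq (fun i => α i a) y (fun i => (hy i).symm)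
      have hsum_eq : (∑ i : Fin m, tei α (y i) * (p : ℤ_[p]) ^ (i : ℕ))
          = ∑ i ∈ Finset.range m, α i a * (p : ℤ_[p]) ^ i := by
        rw [← Fin.sum_univ_eq_sum_range (fun i => α i a * (p : ℤ_[p]) ^ i) m]
        exact Finset.sum_congr rfl (fun i _ => by rw [hy i])
      have hvy : v y = f (∑ i ∈ Finset.range m, α i a * (p : ℤ_[p]) ^ i) := by
        show f _ = _
        rw [hsum_eq]
      rw [heval, hvy]
      apply hδf
      rw [dist_eq_norm]
      exact lt_of_le_of_lt (digit_tail α hsum a m) hm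
    · -- kernel over ℤ_p
      apply le_antisymm
      · intro q hq
        rw [RingHom.mem_ker] at hq
        have hz : ∀ a : ℤ_[p], eval (fun i => α i a) q = 0 := by
          intro a
          rw [← haeval]
          have : (aeval α q) a = (0 : C(ℤ_[p], ℤ_[p])) a := by
            exact congrFun (congrArg _ hq) a
          simpa using this
        apply mem_span_of_eval_zero p hp2 T hTcard hTu hTpow q
        intro x hx
        have hxall : ∀ i : ℕ, ∃ j : Fin p, tei α j = x i := by
          intro i
          obtain ⟨j, -, hj⟩ := Finset.mem_image.mp (hx i)
          exact ⟨j, hj⟩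
        choose j hj using hxall
        obtain ⟨a, ha⟩ := exists_realize α hpow hsum (fun i => tei α (j i))
          (fun i => hpow 0 _)
        have hxa : (fun i => α i a) = x := funext fun i => by rw [ha i, hj i]
        rw [← hxa]
        exact hz a
      · rw [Ideal.span_le]
        rintro _ ⟨i, rfl⟩
        rw [SetLike.mem_coe, RingHom.mem_ker]
        apply ContinuousMap.ext
        intro a
        have : ((aeval α) ((X i : MvPolynomial ℕ ℤ_[p]) ^ p - X i)) a
            = (α i a) ^ p - α i a := by
          rw [map_sub, map_pow, aeval_X, ContinuousMap.sub_apply, ContinuousMap.pow_apply]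
        show ((aeval α) ((X i : MvPolynomial ℕ ℤ_[p]) ^ p - X i)) a = (0 : C(ℤ_[p], ℤ_[p])) a
        rw [this, hpow, sub_self, ContinuousMap.zero_apply]
  · -- the mod p^n statement
    intro n hn
    haveI : Fact (1 < p ^ n) := ⟨(Nat.one_lt_pow_iff hn.ne').mpr hp.1.one_lt⟩
    set F : ℕ → (ℤ_[p] → ZMod (p ^ n)) :=
      fun i => fun a => PadicInt.toZModPow n (α i a) with hF
    have hev_apply : ∀ (q : MvPolynomial ℕ (ZMod (p ^ n))) (a : ℤ_[p]),
        (eval₂Hom (Pi.constRingHom ℤ_[p] (ZMod (p ^ n))) F q) a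
          = eval (fun i => PadicInt.toZModPow n (α i a)) q := by
      intro q a
      have h1 := eval₂_comp_left (Pi.evalRingHom (fun _ : ℤ_[p] => ZMod (p ^ n)) a)
        (Pi.constRingHom ℤ_[p] (ZMod (p ^ n))) F q
      have h2 : (Pi.evalRingHom (fun _ : ℤ_[p] => ZMod (p ^ n)) a).comp
          (Pi.constRingHom ℤ_[p] (ZMod (p ^ n))) = RingHom.id _ := by
        ext r
        rfl
      rw [h2] at h1
      have h3 : (Pi.evalRingHom (fun _ : ℤ_[p] => ZMod (p ^ n)) a) ∘ F
          = fun i => PadicInt.toZModPow n (α i a) := rfl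
      rw [h3, eval₂_id] at h1
      exact h1
    -- Teichmüller points mod p^n
    set t' : Fin p → ZMod (p ^ n) := fun j => PadicInt.toZModPow n (tei α j) with ht'
    have ht'u : ∀ j j' : Fin p, j ≠ j' → IsUnit (t' j - t' j') := by
      intro j j' h
      have := (tei_sub_unit α hsum h).map (PadicInt.toZModPow n)
      rwa [map_sub] at this
    set T' : Finset (ZMod (p ^ n)) := Finset.image t' Finset.univ with hT'
    have ht'inj : Function.Injective t' := by
      intro j j' h
      by_contra hne
      exact (ht'u j j' hne).ne_zero (sub_eq_zero.mpr h)
    have hT'card : T'.card = p := by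
      rw [hT', Finset.card_image_of_injective _ ht'inj, Finset.card_univ, Fintype.card_fin]
    have hT'u : ∀ a ∈ T', ∀ b ∈ T', a ≠ b → IsUnit (a - b) := by
      rintro a ha b hb hab
      obtain ⟨j, -, rfl⟩ := Finset.mem_image.mp ha
      obtain ⟨j', -, rfl⟩ := Finset.mem_image.mp hb
      exact ht'u j j' (fun h => hab (by rw [h]))
    have hT'pow : ∀ t ∈ T', t ^ p = t := by
      rintro t ht
      obtain ⟨j, -, rfl⟩ := Finset.mem_image.mp ht
      have h1 : t' j ^ p = PadicInt.toZModPow n (tei α j ^ p) := (map_pow _ _ _).symm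
      have h2 : tei α j ^ p = tei α j := hpow 0 _
      rw [h1, h2]
    constructor
    · -- surjectivity mod p^n
      intro g
      obtain ⟨m, hm⟩ := loc_const g
      set v : (Fin m → Fin p) → ZMod (p ^ n) :=
        fun y => g (∑ i : Fin m, tei α (y i) * (p : ℤ_[p]) ^ (i : ℕ)) with hv
      obtain ⟨q, hq⟩ := exists_interpolation p m t' ht'u v
      refine ⟨q, funext fun a => ?_⟩
      rw [hev_apply]
      choose y hy using fun i : Fin m => hdigit_tei (i : ℕ) a
      have heval : eval (fun i => PadicInt.toZModPow n (α i a)) q = v y := by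
        apply hq (fun i => PadicInt.toZModPow n (α i a)) y
        intro i
        show PadicInt.toZModPow n (α (i : ℕ) a) = PadicInt.toZModPow n (tei α (y i))
        rw [hy i]
      rw [heval]
      have hvy : (∑ i : Fin m, tei α (y i) * (p : ℤ_[p]) ^ (i : ℕ))
          = ∑ i ∈ Finset.range m, α i a * (p : ℤ_[p]) ^ i := by
        rw [← Fin.sum_univ_eq_sum_range (fun i => α i a * (p : ℤ_[p]) ^ i) m]
        exact Finset.sum_congr rfl (fun i _ => by rw [hy i])
      show g _ = g a
      rw [hvy]
      apply hm
      rw [norm_sub_rev]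
      exact digit_tail α hsum a m
    · -- kernel mod p^n
      apply le_antisymm
      · intro q hq
        rw [RingHom.mem_ker] at hq
        have hz : ∀ a : ℤ_[p], eval (fun i => PadicInt.toZModPow n (α i a)) q = 0 := by
          intro a
          rw [← hev_apply]
          exact congrFun hq a
        apply mem_span_of_eval_zero p hp2 T' hT'card hT'u hT'pow q
        intro x hx
        have hxall : ∀ i : ℕ, ∃ j : Fin p, t' j = x i := by
          intro i
          obtain ⟨j, -, hj⟩ := Finset.mem_image.mp (hx i)
          exact ⟨j, hj⟩
        choose j hj using hxall
        obtain ⟨a, ha⟩ := exists_realize α hpow hsum (fun i => tei α (j i))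
          (fun i => hpow 0 _)
        have hxa : (fun i => PadicInt.toZModPow n (α i a)) = x := by
          funext i
          rw [ha i]
          exact hj i
        rw [← hxa]
        exact hz a
      · rw [Ideal.span_le]
        rintro _ ⟨i, rfl⟩
        rw [SetLike.mem_coe, RingHom.mem_ker]
        funext a
        show (eval₂Hom (Pi.constRingHom ℤ_[p] (ZMod (p ^ n))) F
          ((X i : MvPolynomial ℕ (ZMod (p ^ n))) ^ p - X i)) a = 0
        rw [hev_apply, map_sub, map_pow, eval_X, ← map_pow, hpow, sub_self]
end

section
/- (Mahler's theorem) The binomial coefficient functions β_k : ℤ_p → ℤ_p, β_k(x) = C(x,k), form a topological basis of the ℤ_p-module of continuous functions ℤ_p → ℤ_p: every continuous f : ℤ_p → ℤ_p can be written uniquely as f = ∑_{k≥0} c_k β_k with c_k ∈ ℤ_p and c_k → 0 p-adically. -/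
open Filter PadicInt Polynomial
open scoped fwdDiff

section aux
variable {p : ℕ} [Fact p.Prime]

lemma my_smeval_descPochhammer (k : ℕ) (x : ℤ_[p]) :
    (descPochhammer ℤ k).smeval x = ∏ i ∈ Finset.range k, (x - (i : ℤ_[p])) := by
  induction k with
  | zero => simp [descPochhammer]
  | succ n ih =>
    rw [descPochhammer_succ_right, Polynomial.smeval_mul, ih, Finset.prod_range_succ,
      Polynomial.smeval_sub, Polynomial.smeval_X, Polynomial.smeval_natCast]
    simp

lemma my_fact_mul_choose (k : ℕ) (x : ℤ_[p]) :
    (k.factorial : ℤ_[p]) * Ring.choose x k = ∏ i ∈ Finset.range k, (x - (i : ℤ_[p])) := by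
  rw [← my_smeval_descPochhammer, Ring.descPochhammer_eq_factorial_smul_choose, nsmul_eq_mul]

lemma my_coe_fwdDiff_iter (f : ℤ_[p] → ℤ_[p]) (n : ℕ) (x : ℤ_[p]) :
    (((fwdDiff 1)^[n] f x : ℤ_[p]) : ℚ_[p]) = (fwdDiff 1)^[n] (fun y => (f y : ℚ_[p])) x := by
  induction n generalizing f x with
  | zero => rfl
  | succ n ih =>
    have h1 : (fun y : ℤ_[p] => ((fwdDiff 1 f y : ℤ_[p]) : ℚ_[p]))
        = fwdDiff 1 (fun y => (f y : ℚ_[p])) := by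
      funext y
      simp [fwdDiff]
    rw [Function.iterate_succ_apply, Function.iterate_succ_apply, ih, h1]

instance my_isBoundedSMul : IsBoundedSMul ℤ_[p] ℚ_[p] :=
  IsBoundedSMul.of_norm_smul_le (fun r x => by
    rw [Algebra.smul_def, norm_mul]
    exact le_of_eq rfl)

end aux

/-- **Mahler's theorem.**  Let `c k : ℤ_p → ℤ_p` be the binomial coefficient functions
`β_k(x) = C(x, k)`, characterized by `k! * β_k(x) = x(x-1)⋯(x-k+1)` (this determines them
uniquely since `ℤ_p` is a domain).  Then every continuous `f : ℤ_p → ℤ_p` has a unique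
representation `f = ∑_k a_k β_k` with coefficients `a_k ∈ ℤ_p` tending to `0` `p`-adically. -/
theorem stmt_3 (p : ℕ) [Fact p.Prime]
    (c : ℕ → ℤ_[p] → ℤ_[p])
    (hc : ∀ (k : ℕ) (x : ℤ_[p]),
      (k.factorial : ℤ_[p]) * c k x = ∏ i ∈ Finset.range k, (x - (i : ℤ_[p])))
    (f : C(ℤ_[p], ℤ_[p])) :
    ∃! a : ℕ → ℤ_[p],
      Filter.Tendsto a Filter.atTop (nhds 0) ∧
        ∀ x : ℤ_[p], HasSum (fun k => a k * c k x) (f x) := by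
  have hcoe_cont : Continuous (fun z : ℤ_[p] => (z : ℚ_[p])) := continuous_subtype_val
  have hc' : ∀ k x, c k x = Ring.choose x k := by
    intro k x
    have h := (hc k x).trans (my_fact_mul_choose k x).symm
    exact mul_left_cancel₀ (Nat.cast_ne_zero.mpr k.factorial_ne_zero) h
  set g : C(ℤ_[p], ℚ_[p]) := ⟨fun x => (f x : ℚ_[p]), hcoe_cont.comp f.continuous⟩ with hg_def
  set a : ℕ → ℤ_[p] := fun n => (fwdDiff 1)^[n] (⇑f) 0 with ha_def
  have hag : ∀ n, ((a n : ℤ_[p]) : ℚ_[p]) = (fwdDiff 1)^[n] (⇑g) 0 := fun n =>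
    my_coe_fwdDiff_iter (⇑f) n 0
  have hga := PadicInt.fwdDiff_tendsto_zero g
  -- a tends to zero
  have hta : Tendsto a atTop (nhds 0) := by
    rw [tendsto_zero_iff_norm_tendsto_zero] at hga ⊢
    convert hga using 2 with n
    rw [← hag, padic_norm_e_of_padicInt]
  -- main HasSum, in ℚ_[p], pointwise
  have hgsum : ∀ x : ℤ_[p], HasSum (fun k => ((a k * c k x : ℤ_[p]) : ℚ_[p])) (g x) := by
    intro x
    have h0 := (PadicInt.hasSum_mahler g).mapL (ContinuousMap.evalCLM ℚ_[p] x)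
    convert h0 using 2 with k
    case e'_3 => rfl
    case e'_6 => rfl
    rw [show (ContinuousMap.evalCLM ℚ_[p] x) (PadicInt.mahlerTerm ((fwdDiff 1)^[k] (⇑g) 0) k)
        = (PadicInt.mahlerTerm ((fwdDiff 1)^[k] (⇑g) 0) k) x from rfl]
    rw [PadicInt.mahlerTerm_apply, ← hag, mahler_apply, hc', PadicInt.coe_mul]
    exact mul_comm _ _
  -- transfer HasSum to ℤ_[p]
  have hsum : ∀ x : ℤ_[p], HasSum (fun k => a k * c k x) (f x) := by
    intro x
    have hsummable : Summable (fun k => a k * c k x) := by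
      refine NonarchimedeanAddGroup.summable_of_tendsto_cofinite_zero ?_
      rw [Nat.cofinite_eq_atTop, tendsto_zero_iff_norm_tendsto_zero]
      refine squeeze_zero (fun n => norm_nonneg _) (fun n => ?_)
        (by rwa [tendsto_zero_iff_norm_tendsto_zero] at hta)
      calc ‖a n * c n x‖ ≤ ‖a n‖ * ‖c n x‖ := norm_mul_le _ _
        _ ≤ ‖a n‖ * 1 := by
            exact mul_le_mul_of_nonneg_left (PadicInt.norm_le_one _) (norm_nonneg _)
        _ = ‖a n‖ := mul_one _
    obtain ⟨S, hS⟩ := hsummable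
    have hmap := hS.map (PadicInt.Coe.ringHom (p := p)).toAddMonoidHom hcoe_cont
    have : (S : ℚ_[p]) = (f x : ℚ_[p]) := hmap.unique (hgsum x)
    rwa [Subtype.coe_injective this] at hS
  refine ⟨a, ⟨hta, hsum⟩, ?_⟩
  -- uniqueness
  rintro b ⟨htb, hbsum⟩
  have htb' : Tendsto (fun n => ((b n : ℤ_[p]) : ℚ_[p])) atTop (nhds 0) := by
    have := (hcoe_cont.tendsto 0).comp htb
    exact this
  have hser : PadicInt.mahlerSeries (fun n => ((b n : ℤ_[p]) : ℚ_[p])) = g := by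
    ext x
    rw [PadicInt.mahlerSeries_apply htb' x]
    have : HasSum (fun k => mahler k x • ((b k : ℤ_[p]) : ℚ_[p])) (g x) := by
      have h2 := (hbsum x).map (PadicInt.Coe.ringHom (p := p)).toAddMonoidHom hcoe_cont
      have hfun : (⇑(PadicInt.Coe.ringHom (p := p)).toAddMonoidHom ∘ fun k => b k * c k x)
          = fun k => mahler k x • ((b k : ℤ_[p]) : ℚ_[p]) := by
        funext k
        show ((b k * c k x : ℤ_[p]) : ℚ_[p]) = _
        rw [PadicInt.coe_mul, hc', mahler_apply]
        exact mul_comm _ _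
      have hval : (PadicInt.Coe.ringHom (p := p)).toAddMonoidHom (f x) = g x := rfl
      rw [hfun, hval] at h2
      exact h2
    exact this.tsum_eq
  funext n
  have := PadicInt.fwdDiff_mahlerSeries (p := p) htb' n
  rw [hser] at this
  have hbn : ((b n : ℤ_[p]) : ℚ_[p]) = ((a n : ℤ_[p]) : ℚ_[p]) := by rw [hag n, ← this]
  exact Subtype.coe_injective hbn
end

section
/- Let R be a p-torsion-free, p-complete commutative ring, and let M be a p-complete R-module. If M is p-torsion-free and M/pM is a free module over R/pR, then there exists a free R-module F and a map F → M that becomes an isomorphism after p-completion; in particular M is the p-completion of a free R-module. -/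
open Pointwise

/-- Let `R` be a `p`-torsion-free, `p`-adically complete commutative ring and `M` a
`p`-adically complete `R`-module.  If `M` is `p`-torsion-free and `M/pM` is free over
`R/pR`, then there is a free `R`-module `F` and a map `F → M` that becomes an isomorphism
after `p`-adic completion; in particular `M` is the `p`-completion of a free `R`-module. -/
theorem stmt_8 (p : ℕ) [Fact p.Prime] (R : Type) [CommRing R]
    (M : Type) [AddCommGroup M] [Module R M]
    (hRc : IsAdicComplete (Ideal.span {(p : R)}) R)
    (hMc : IsAdicComplete (Ideal.span {(p : R)}) M)
    (hRtf : ∀ x : R, (p : R) * x = 0 → x = 0)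
    (hMtf : ∀ m : M, (p : R) • m = 0 → m = 0)
    (hfree : Module.Free (R ⧸ Ideal.span {(p : R)})
      (M ⧸ (Ideal.span {(p : R)} • (⊤ : Submodule R M)))) :
    ∃ (ι : Type) (φ : (ι →₀ R) →ₗ[R] M),
      Function.Bijective ⇑(AdicCompletion.map (Ideal.span {(p : R)}) φ) := by
  classical
  set I : Ideal R := Ideal.span {(p : R)} with hIdef
  -- membership in I^n • ⊤
  have memI : ∀ (N : Type) [AddCommGroup N] [Module R N] (n : ℕ) (x : N),
      x ∈ ((I ^ n) • ⊤ : Submodule R N) ↔ ∃ y, (p : R) ^ n • y = x := by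
    intro N _ _ n x
    rw [hIdef, Ideal.span_singleton_pow, Submodule.ideal_span_singleton_smul]
    constructor
    · intro h
      rw [← SetLike.mem_coe, Submodule.coe_pointwise_smul] at h
      obtain ⟨y, -, hy⟩ := h
      exact ⟨y, hy⟩
    · rintro ⟨y, rfl⟩
      exact Submodule.smul_mem_pointwise_smul y _ ⊤ trivial
  have memI1 : ∀ (N : Type) [AddCommGroup N] [Module R N] (x : N),
      x ∈ (I • ⊤ : Submodule R N) ↔ ∃ y, (p : R) • y = x := by
    intro N _ _ x
    have := memI N 1 x
    simpa using this
  -- the basis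
  let ι := Module.Free.ChooseBasisIndex (R ⧸ I) (M ⧸ (I • ⊤ : Submodule R M))
  let b : Module.Basis ι (R ⧸ I) (M ⧸ (I • ⊤ : Submodule R M)) :=
    Module.Free.chooseBasis _ _
  have hlift : ∀ i : ι, ∃ x : M,
      (Submodule.Quotient.mk x : M ⧸ (I • ⊤ : Submodule R M)) = b i := fun i =>
    Submodule.Quotient.mk_surjective _ (b i)
  choose lift hliftspec using hlift
  let φ : (ι →₀ R) →ₗ[R] M := Finsupp.linearCombination R lift
  -- key compatibility with the basis
  have key : ∀ f : ι →₀ R,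
      (Submodule.Quotient.mk (φ f) : M ⧸ (I • ⊤ : Submodule R M)) =
        Finsupp.linearCombination (R ⧸ I) (⇑b)
          (f.mapRange (Ideal.Quotient.mk I) (map_zero _)) := by
    intro f
    induction f using Finsupp.induction_linear with
    | zero => simp
    | add f g hf hg =>
      rw [map_add, Submodule.Quotient.mk_add, hf, hg, Finsupp.mapRange_add (map_add _), map_add]
    | single i r =>
      rw [Finsupp.mapRange_single]
      show (Submodule.Quotient.mk (Finsupp.linearCombination R lift (Finsupp.single i r)) :
        M ⧸ (I • ⊤ : Submodule R M)) = _
      rw [Finsupp.linearCombination_single, Finsupp.linearCombination_single,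
        ← hliftspec i, Module.Quotient.mk_smul_mk]
  -- lifting finsupps along the quotient map
  have hmaprange : ∀ c : ι →₀ (R ⧸ I), ∃ f : ι →₀ R,
      f.mapRange (Ideal.Quotient.mk I) (map_zero _) = c := by
    intro c
    choose r hr using fun i => Ideal.Quotient.mk_surjective (c i)
    refine ⟨Finsupp.onFinset c.support (fun i => if c i = 0 then 0 else r i) ?_, ?_⟩
    · intro i hi
      rw [Finsupp.mem_support_iff]
      intro h
      exact hi (by simp [h])
    · ext i
      rw [Finsupp.mapRange_apply, Finsupp.onFinset_apply]
      by_cases h : c i = 0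
      · simp [h]
      · simp [h, hr i]
  -- surjectivity mod p
  have hsurj1 : ∀ x : M, ∃ f : ι →₀ R, ∃ y : M, x = φ f + (p : R) • y := by
    intro x
    obtain ⟨f, hf⟩ := hmaprange (b.repr (Submodule.Quotient.mk x))
    have hmk : (Submodule.Quotient.mk (φ f) : M ⧸ (I • ⊤ : Submodule R M)) =
        Submodule.Quotient.mk x := by
      rw [key f, hf, b.linearCombination_repr]
    have hmem : x - φ f ∈ (I • ⊤ : Submodule R M) := (Submodule.Quotient.eq _).mp hmk.symm
    obtain ⟨y, hy⟩ := (memI1 M _).mp hmem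
    exact ⟨f, y, by rw [hy]; abel⟩
  -- injectivity mod p
  have hinj1 : ∀ f : ι →₀ R, (∃ y, φ f = (p : R) • y) → ∃ g, f = (p : R) • g := by
    rintro f ⟨y, hy⟩
    have h0 : (Submodule.Quotient.mk (φ f) : M ⧸ (I • ⊤ : Submodule R M)) = 0 := by
      rw [Submodule.Quotient.mk_eq_zero, hy]
      exact (memI1 M _).mpr ⟨y, rfl⟩
    rw [key f] at h0
    have hc : f.mapRange (Ideal.Quotient.mk I) (map_zero _) = 0 := by
      have := congrArg b.repr h0
      rwa [b.repr_linearCombination, map_zero] at this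
    have hfi : ∀ i, ∃ r, f i = (p : R) * r := by
      intro i
      have h1 : Ideal.Quotient.mk I (f i) = 0 := by
        have := congrArg (fun g : ι →₀ (R ⧸ I) => g i) hc
        simpa [Finsupp.mapRange_apply] using this
      rw [Ideal.Quotient.eq_zero_iff_mem, hIdef, Ideal.mem_span_singleton] at h1
      obtain ⟨r, hr⟩ := h1
      exact ⟨r, hr⟩
    choose r hr using hfi
    refine ⟨Finsupp.onFinset f.support (fun i => if f i = 0 then 0 else r i) ?_, ?_⟩
    · intro i hi
      rw [Finsupp.mem_support_iff]
      intro h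
      exact hi (by simp [h])
    · ext i
      by_cases h : f i = 0
      · simp [Finsupp.smul_apply, Finsupp.onFinset_apply, h]
      · simp only [Finsupp.smul_apply, Finsupp.onFinset_apply, if_neg h, smul_eq_mul]
        exact hr i
  -- injectivity mod p^n
  have Inj : ∀ n : ℕ, ∀ f : ι →₀ R, (∃ y, φ f = (p : R) ^ n • y) →
      ∃ g, f = (p : R) ^ n • g := by
    intro n
    induction n with
    | zero => intro f _; exact ⟨f, by simp⟩
    | succ n ih =>
      rintro f ⟨y, hy⟩
      obtain ⟨g, rfl⟩ := hinj1 f ⟨(p : R) ^ n • y, by rw [hy, pow_succ', mul_smul]⟩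
      have h2 : φ g = (p : R) ^ n • y := by
        have h3 : (p : R) • φ g = (p : R) • ((p : R) ^ n • y) := by
          rw [← map_smul, hy, pow_succ', mul_smul]
        exact sub_eq_zero.mp (hMtf _ (by rw [smul_sub, h3, sub_self]))
      obtain ⟨h, rfl⟩ := ih g ⟨y, h2⟩
      exact ⟨h, by rw [pow_succ', mul_smul]⟩
  -- surjectivity mod p^n
  have Surj : ∀ n : ℕ, ∀ x : M, ∃ f y, x = φ f + (p : R) ^ n • y := by
    intro n
    induction n with
    | zero => intro x; exact ⟨0, x, by simp⟩
    | succ n ih =>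
      intro x
      obtain ⟨f, y, rfl⟩ := ih x
      obtain ⟨f', y', rfl⟩ := hsurj1 y
      refine ⟨f + (p : R) ^ n • f', y', ?_⟩
      rw [map_add, map_smul, smul_add, ← mul_smul, ← pow_succ, ← add_assoc]
  -- bijectivity of the reduced maps
  have hbij : ∀ n : ℕ, Function.Bijective (φ.reduceModIdeal (I ^ n)) := by
    intro n
    constructor
    · intro x y hxy
      obtain ⟨f, rfl⟩ := Submodule.Quotient.mk_surjective _ x
      obtain ⟨g, rfl⟩ := Submodule.Quotient.mk_surjective _ y
      rw [LinearMap.reduceModIdeal_apply, LinearMap.reduceModIdeal_apply,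
        Submodule.Quotient.eq] at hxy
      obtain ⟨z, hz⟩ := (memI M n _).mp hxy
      obtain ⟨g', hg'⟩ := Inj n (f - g) ⟨z, by rw [map_sub, ← hz]⟩
      rw [Submodule.Quotient.eq]
      exact (memI _ n _).mpr ⟨g', hg'.symm⟩
    · intro x
      obtain ⟨m, rfl⟩ := Submodule.Quotient.mk_surjective _ x
      obtain ⟨f, y, rfl⟩ := Surj n m
      refine ⟨Submodule.Quotient.mk f, ?_⟩
      rw [LinearMap.reduceModIdeal_apply, Submodule.Quotient.eq]
      refine (memI M n _).mpr ⟨-y, ?_⟩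
      rw [smul_neg]
      abel
  let e : ∀ n : ℕ, ((ι →₀ R) ⧸ ((I ^ n) • ⊤ : Submodule R (ι →₀ R))) ≃ₗ[R ⧸ I ^ n]
      (M ⧸ ((I ^ n) • ⊤ : Submodule R M)) :=
    fun n => LinearEquiv.ofBijective _ (hbij n)
  have he : ∀ n (x : (ι →₀ R) ⧸ ((I ^ n) • ⊤ : Submodule R (ι →₀ R))),
      e n x = φ.reduceModIdeal (I ^ n) x := fun n x => rfl
  refine ⟨ι, φ, ?_, ?_⟩
  · -- injectivity
    intro x y hxy
    ext n
    apply (hbij n).injective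
    have h := congrArg (fun z : AdicCompletion I M => z.val n) hxy
    simpa [AdicCompletion.map_val_apply] using h
  · -- surjectivity
    intro y
    have hcompat : ∀ {m n : ℕ} (hmn : m ≤ n),
        AdicCompletion.transitionMap I (ι →₀ R) hmn ((e n).symm (y.val n)) =
          (e m).symm (y.val m) := by
      intro m n hmn
      apply (hbij m).injective
      have h1 := LinearMap.congr_fun
        (AdicCompletion.transitionMap_comp_reduceModIdeal I φ hmn) ((e n).symm (y.val n))
      simp only [LinearMap.coe_comp, Function.comp_apply, LinearMap.coe_restrictScalars] at h1
      rw [← h1, ← he n, (e n).apply_symm_apply, ← he m, (e m).apply_symm_apply]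
      exact y.property hmn
    refine ⟨⟨fun n => (e n).symm (y.val n), hcompat⟩, ?_⟩
    ext n
    show φ.reduceModIdeal (I ^ n) ((e n).symm (y.val n)) = y.val n
    rw [← he n, (e n).apply_symm_apply]
end

section
/- Let p be a prime and define f_i, b_i by the Witt-vector-style relations: b_0 = b, and ψ^{p^n}(b) = b_0^{p^n} + p b_1^{p^{n−1}} + ⋯ + p^n b_n in ℤ_p[b_0, b_1, …], with f defined by f = ψ^p(b) − b and f_i = θ_i(f) defined by the analogous relations ψ^{p^n}(f) = f_0^{p^n} + ⋯ + p^n f_n. Then for every i, f_i ≡ b_i^p − b_i modulo the ideal (p, b_0, …, b_{i−1}). -/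
/-!
Iterating `ψ` from `b = w_0` gives `ψ^[n] b = w_n`, so the ghost components of `(f_i)` are
`w_{n+1} − w_n`. Setting `b_0, …, b_{i−1}` to zero changes nothing modulo the ideal, and afterwards
every `w_n(b)` is divisible by `pⁱ` and congruent to `pⁱ b_i^{p^{n−i}}` modulo `p^{i+1}`. In a
`p`-torsion-free ring, ghost components `w_j(g) ≡ 0 mod p^{j+1}` for `j < i` force `g_0, …, g_{i−1}`
into `(p)`, and then `w_i(g) ≡ pⁱ g_i mod p^{i+1}`; comparing with `pⁱ (b_i^p − b_i)` and cancelling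
`pⁱ` gives the claim.
-/

open MvPolynomial

theorem dvd_of_pow_succ_dvd_pow_mul {M : Type*} [Monoid M] {q a : M} (hq : IsLeftRegular q)
    {k : ℕ} (h : q ^ (k + 1) ∣ q ^ k * a) : q ∣ a := by
  obtain ⟨c, hc⟩ := h
  exact ⟨c, hq.pow k (show q ^ k * a = q ^ k * (q * c) by rw [hc, pow_succ, mul_assoc])⟩

section GhostCongruences

variable (S : Type*) {R : Type*} [CommRing S] [CommRing R] [Algebra S R] {p : ℕ}

theorem pow_succ_dvd_aeval_wittPolynomial_sub (hp : 1 < p) {g : ℕ → R} {n : ℕ}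
    (hg : ∀ j < n, (p : R) ∣ g j) :
    (p : R) ^ (n + 1) ∣ aeval g (wittPolynomial p S n) - (p : R) ^ n * g n := by
  rw [aeval_wittPolynomial, Finset.sum_range_succ, Nat.sub_self, pow_zero, pow_one,
    add_sub_cancel_right]
  refine Finset.dvd_sum fun j hj => ?_
  obtain ⟨c, hc⟩ := hg j (Finset.mem_range.mp hj)
  rw [hc]
  -- `p ^ (n - j) ≥ n - j + 1`, so the term carries at least `p ^ (n + 1)`
  have hexp : n + 1 ≤ j + p ^ (n - j) := by
    have := Nat.lt_pow_self (n := n - j) hp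
    have := Finset.mem_range.mp hj
    omega
  rw [mul_pow, ← mul_assoc, ← pow_add]
  exact (pow_dvd_pow _ hexp).mul_right _

theorem dvd_of_pow_succ_dvd_aeval_wittPolynomial (hp : 1 < p) (hreg : IsLeftRegular (p : R))
    {g : ℕ → R} {m : ℕ} (hW : ∀ j < m, (p : R) ^ (j + 1) ∣ aeval g (wittPolynomial p S j)) :
    ∀ j < m, (p : R) ∣ g j := by
  intro j
  induction j using Nat.strong_induction_on with
  | _ j ih =>
    intro hj
    have hsub := pow_succ_dvd_aeval_wittPolynomial_sub S hp fun k hk => ih k hk (hk.trans hj)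
    exact dvd_of_pow_succ_dvd_pow_mul hreg <| by
      simpa using dvd_sub (hW j hj) hsub

theorem dvd_sub_of_aeval_wittPolynomial_dvd (hp : 1 < p) (hreg : IsLeftRegular (p : R))
    {g : ℕ → R} {i : ℕ} {y : R}
    (hW : ∀ j < i, (p : R) ^ (j + 1) ∣ aeval g (wittPolynomial p S j))
    (hWi : (p : R) ^ (i + 1) ∣ aeval g (wittPolynomial p S i) - (p : R) ^ i * y) :
    (p : R) ∣ g i - y := by
  have hsub := pow_succ_dvd_aeval_wittPolynomial_sub S hp
    (dvd_of_pow_succ_dvd_aeval_wittPolynomial S hp hreg hW)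
  refine dvd_of_pow_succ_dvd_pow_mul (k := i) hreg ?_
  convert dvd_sub hWi hsub using 1
  ring

variable {y : ℕ → R} {i : ℕ}

theorem pow_dvd_aeval_wittPolynomial (hp : p ≠ 0) (hy : ∀ k < i, y k = 0) (n : ℕ) :
    (p : R) ^ i ∣ aeval y (wittPolynomial p S n) := by
  rw [aeval_wittPolynomial]
  refine Finset.dvd_sum fun j _ => ?_
  rcases lt_or_ge j i with hji | hij
  · rw [hy j hji, zero_pow (pow_ne_zero _ hp), mul_zero]
    exact dvd_zero _
  · exact (pow_dvd_pow _ hij).mul_right _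

theorem pow_succ_dvd_aeval_wittPolynomial_sub_pow (hp : p ≠ 0) (hy : ∀ k < i, y k = 0)
    {n : ℕ} (hin : i ≤ n) :
    (p : R) ^ (i + 1) ∣ aeval y (wittPolynomial p S n) - (p : R) ^ i * y i ^ p ^ (n - i) := by
  have hi : i ∈ Finset.range (n + 1) := Finset.mem_range.mpr (Nat.lt_succ_of_le hin)
  rw [aeval_wittPolynomial, ← Finset.add_sum_erase _ _ hi, add_sub_cancel_left]
  refine Finset.dvd_sum fun j hj => ?_
  rcases lt_or_gt_of_ne (Finset.ne_of_mem_erase hj) with hji | hij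
  · rw [hy j hji, zero_pow (pow_ne_zero _ hp), mul_zero]
    exact dvd_zero _
  · exact (pow_dvd_pow _ hij).mul_right _

/-- `g` plays the role of `θ(ψ^p(y) − y)`, for a `y` with `y_0 = ⋯ = y_{i−1} = 0`. -/
theorem dvd_sub_pow_sub_of_aeval_wittPolynomial_eq (hp : 1 < p) (hreg : IsLeftRegular (p : R))
    (hy : ∀ k < i, y k = 0) {g : ℕ → R}
    (hg : ∀ n, aeval g (wittPolynomial p S n) =
      aeval y (wittPolynomial p S (n + 1)) - aeval y (wittPolynomial p S n)) :
    (p : R) ∣ g i - (y i ^ p - y i) := by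
  have hp0 : p ≠ 0 := by omega
  refine dvd_sub_of_aeval_wittPolynomial_dvd S hp hreg (fun j hj => ?_) ?_
  · rw [hg]
    exact (pow_dvd_pow _ hj).trans (dvd_sub (pow_dvd_aeval_wittPolynomial S hp0 hy _)
      (pow_dvd_aeval_wittPolynomial S hp0 hy _))
  · have hnext := pow_succ_dvd_aeval_wittPolynomial_sub_pow S hp0 hy (Nat.le_succ i)
    have hcur := pow_succ_dvd_aeval_wittPolynomial_sub_pow S hp0 hy (le_refl i)
    rw [Nat.succ_sub le_rfl, Nat.sub_self, pow_one] at hnext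
    rw [Nat.sub_self, pow_zero, pow_one] at hcur
    rw [hg]
    convert dvd_sub hnext hcur using 1
    ring

end GhostCongruences

theorem iterate_sub_X_zero_eq_wittPolynomial_sub {R : Type*} [CommRing R] {p : ℕ}
    {ψ : MvPolynomial ℕ R →+* MvPolynomial ℕ R}
    (hψ : ∀ n, ψ (wittPolynomial p R n) = wittPolynomial p R (n + 1)) (n : ℕ) :
    (⇑ψ)^[n] (ψ (X 0) - X 0) = wittPolynomial p R (n + 1) - wittPolynomial p R n := by
  have hX : ∀ m, (⇑ψ)^[m] (X 0) = wittPolynomial p R m := by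
    intro m
    induction m with
    | zero => simp
    | succ m ih => rw [Function.iterate_succ_apply', ih, hψ]
  rw [← RingHom.coe_pow, map_sub, RingHom.coe_pow, ← Function.iterate_succ_apply, hX, hX]

theorem sub_aeval_ite_zero_X_mem_span_X_image {σ R : Type*} [CommRing R] (s : Set σ) [DecidablePred (· ∈ s)]
    (φ : MvPolynomial σ R) :
    φ - aeval (fun k => if k ∈ s then 0 else X k) φ ∈ Ideal.span (X '' s) := by
  rw [← neg_mem_iff, neg_sub, ← Ideal.Quotient.eq]
  change (Ideal.Quotient.mkₐ R _).comp (aeval _) φ = Ideal.Quotient.mkₐ R _ φ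
  congr 1
  refine algHom_ext fun k => ?_
  simp only [AlgHom.comp_apply, aeval_X, Ideal.Quotient.mkₐ_eq_mk]
  split_ifs with hk
  · exact (Ideal.Quotient.eq_zero_iff_mem.mpr (Ideal.subset_span (Set.mem_image_of_mem X hk))).symm
  · rfl

/-- `ψ` stands for `ψ^p`, so `ψ^{pⁿ} = ψ^[n]`; `b = X 0`, and `F` lists the `θ_i(f)`. -/
theorem stmt_9 (p : ℕ) [Fact p.Prime]
    (ψ : MvPolynomial ℕ ℤ_[p] →+* MvPolynomial ℕ ℤ_[p])
    (hψ : ∀ n : ℕ, ψ (wittPolynomial p ℤ_[p] n) = wittPolynomial p ℤ_[p] (n + 1))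
    (F : ℕ → MvPolynomial ℕ ℤ_[p])
    (hF : ∀ n : ℕ,
      (⇑ψ)^[n] (ψ (X 0) - X 0) = MvPolynomial.bind₁ F (wittPolynomial p ℤ_[p] n))
    (i : ℕ) :
    F i - ((X i) ^ p - X i) ∈
      Ideal.span
        (insert (MvPolynomial.C (p : ℤ_[p]))
          ((fun j : ℕ => (X j : MvPolynomial ℕ ℤ_[p])) '' Set.Iio i)) := by
  have hp : p.Prime := Fact.out
  set τ := aeval (R := ℤ_[p]) fun k : ℕ =>
    if k ∈ Set.Iio i then 0 else (X k : MvPolynomial ℕ ℤ_[p])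
  have hghost : ∀ n, aeval (fun k => τ (F k)) (wittPolynomial p ℤ_[p] n) =
      τ (wittPolynomial p ℤ_[p] (n + 1)) - τ (wittPolynomial p ℤ_[p] n) := by
    intro n
    rw [← aeval_bind₁, ← hF, iterate_sub_X_zero_eq_wittPolynomial_sub hψ, map_sub]
  have hreg : IsLeftRegular (p : MvPolynomial ℕ ℤ_[p]) :=
    (IsRegular.of_ne_zero (Nat.cast_ne_zero.mpr hp.ne_zero)).left
  have hdvd := dvd_sub_pow_sub_of_aeval_wittPolynomial_eq _ (i := i) hp.one_lt hreg
    (fun k hk => if_pos hk) hghost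
  rw [if_neg (lt_irrefl i), ← map_natCast C, ← Ideal.mem_span_singleton] at hdvd
  rw [Ideal.span_insert]
  convert Submodule.add_mem_sup hdvd (sub_aeval_ite_zero_X_mem_span_X_image _ (F i)) using 1
  ring
end

section
/- The ring homomorphism π : ℤ_p[b_0, b_1, …]^∧_p → Maps_cts(ℤ_p, ℤ_p) determined by b_i ↦ α_i and continuity is surjective, where α_i is the i-th Teichmüller digit function; moreover π(b_i) ≡ α_i mod p for all i. -/
/-!
The first `n` Teichmüller digits of `a` and `b` agree iff `a ≡ b mod pⁿ`, because two
solutions of `z ^ p = z` that agree mod `p` agree mod every `p ^ (k + 1)` (raise to the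
`p ^ k`-th power), hence are equal. So distinct Teichmüller digits differ by units, and Lagrange
interpolation over the finitely many solutions of `z ^ p = z` writes the indicator of
`{α_i = c}` as a polynomial in `α_i`. Products of these are the indicators of the residue
classes mod `pⁿ`, and by uniform continuity their `ℤ_[p]`-linear combinations approximate every
continuous function. The congruence `π(b_i) ≡ α_i` is even an equality.
-/

open MvPolynomial

open scoped Classical

theorem pow_pow_eq_self_of_pow_eq_self {M : Type*} [Monoid M] {x : M} {p : ℕ} (hx : x ^ p = x)
    (n : ℕ) : x ^ p ^ n = x := by
  induction n with
  | zero => rw [pow_zero, pow_one]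
  | succ n ih => rw [pow_succ, pow_mul, ih, hx]

namespace Subalgebra

variable {X R : Type*} [TopologicalSpace X] [CommRing R] [TopologicalSpace R]
  [IsTopologicalRing R] (A : Subalgebra R C(X, R)) {S : Finset R}

theorem exists_mem_apply_eq_ite_eq (hS : ∀ s ∈ S, ∀ t ∈ S, s ≠ t → IsUnit (s - t))
    {f : C(X, R)} (hf : f ∈ A) (hfS : ∀ x, f x ∈ S) (c : R) :
    ∃ e ∈ A, ∀ x, e x = if f x = c then 1 else 0 := by
  refine ⟨Ring.inverse (∏ s ∈ S.erase c, (c - s)) • ∏ s ∈ S.erase c, (f - algebraMap R _ s),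
    smul_mem _ (prod_mem fun s _ => sub_mem hf (algebraMap_mem _ s)) _, fun x => ?_⟩
  simp only [ContinuousMap.smul_apply, ContinuousMap.coe_prod, ContinuousMap.coe_sub,
    Finset.prod_apply, Pi.sub_apply, _root_.algebraMap_apply, smul_eq_mul, mul_one]
  split_ifs with hx
  · rw [hx]
    refine Ring.inverse_mul_cancel _ (Finset.prod_induction _ IsUnit (fun _ _ => IsUnit.mul)
      isUnit_one fun s hs => ?_)
    obtain ⟨hsc, hs⟩ := Finset.mem_erase.mp hs
    exact hS c (hx ▸ hfS x) s hs hsc.symm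
  · rw [Finset.prod_eq_zero (Finset.mem_erase.mpr ⟨hx, hfS x⟩) (sub_self _), mul_zero]

theorem exists_mem_apply_eq_ite_forall_eq (hS : ∀ s ∈ S, ∀ t ∈ S, s ≠ t → IsUnit (s - t))
    {ι : Type*} (s : Finset ι) {f : ι → C(X, R)} (hf : ∀ i, f i ∈ A) (hfS : ∀ i x, f i x ∈ S)
    (c : ι → R) : ∃ e ∈ A, ∀ x, e x = if ∀ i ∈ s, f i x = c i then 1 else 0 := by
  choose e he hex using fun i => A.exists_mem_apply_eq_ite_eq hS (hf i) (hfS i) (c i)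
  refine ⟨∏ i ∈ s, e i, prod_mem fun i _ => he i, fun x => ?_⟩
  simp only [ContinuousMap.coe_prod, Finset.prod_apply, hex, Finset.prod_boole]

end Subalgebra

namespace PadicInt

variable {p : ℕ} [hp : Fact p.Prime]

theorem toZModPow_eq_iff_pow_dvd_sub {n : ℕ} {x y : ℤ_[p]} :
    toZModPow n x = toZModPow n y ↔ (p : ℤ_[p]) ^ n ∣ x - y := by
  rw [← sub_eq_zero, ← map_sub, ← RingHom.mem_ker, ker_toZModPow, Ideal.mem_span_singleton]

theorem pow_dvd_sub_iff_norm_sub_le {n : ℕ} {x y : ℤ_[p]} :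
    (p : ℤ_[p]) ^ n ∣ x - y ↔ ‖x - y‖ ≤ (p : ℝ) ^ (-n : ℤ) := by
  rw [norm_le_pow_iff_mem_span_pow, Ideal.mem_span_singleton]

theorem eq_of_pow_eq_self_of_dvd_sub {x y : ℤ_[p]} (hx : x ^ p = x) (hy : y ^ p = y)
    (h : (p : ℤ_[p]) ∣ x - y) : x = y := by
  refine ext_of_toZModPow.mp fun n => toZModPow_eq_iff_pow_dvd_sub.mpr ?_
  have := dvd_sub_pow_of_dvd_sub h n
  rw [pow_pow_eq_self_of_pow_eq_self hx, pow_pow_eq_self_of_pow_eq_self hy] at this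
  exact (pow_dvd_pow _ n.le_succ).trans this

theorem isUnit_sub_of_pow_eq_self {x y : ℤ_[p]} (hx : x ^ p = x) (hy : y ^ p = y)
    (hne : x ≠ y) : IsUnit (x - y) := by
  by_contra h
  exact hne (eq_of_pow_eq_self_of_dvd_sub hx hy
    ((norm_lt_one_iff_dvd _).mp (not_isUnit_iff.mp h)))

variable (p) in
noncomputable def teichmullerSet : Finset ℤ_[p] :=
  (Polynomial.X ^ p - Polynomial.X : Polynomial ℤ_[p]).roots.toFinset

theorem mem_teichmullerSet {z : ℤ_[p]} : z ∈ teichmullerSet p ↔ z ^ p = z := by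
  have hne : (Polynomial.X ^ p - Polynomial.X : Polynomial ℤ_[p]) ≠ 0 := fun h => by
    simpa [Polynomial.coeff_X, hp.out.ne_one.symm] using congrArg (Polynomial.coeff · p) h
  rw [teichmullerSet, Multiset.mem_toFinset, Polynomial.mem_roots hne]
  simp [sub_eq_zero]

theorem isUnit_sub_of_mem_teichmullerSet :
    ∀ s ∈ teichmullerSet p, ∀ t ∈ teichmullerSet p, s ≠ t → IsUnit (s - t) := fun _ hs _ ht =>
  isUnit_sub_of_pow_eq_self (mem_teichmullerSet.mp hs) (mem_teichmullerSet.mp ht)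

theorem pow_dvd_sub_sum_range {a : ℕ → ℤ_[p]} {x : ℤ_[p]}
    (hx : HasSum (fun i => a i * (p : ℤ_[p]) ^ i) x) (n : ℕ) :
    (p : ℤ_[p]) ^ n ∣ x - ∑ i ∈ Finset.range n, a i * (p : ℤ_[p]) ^ i := by
  have htail : HasSum (fun i => a (i + n) * (p : ℤ_[p]) ^ (i + n))
      (x - ∑ i ∈ Finset.range n, a i * (p : ℤ_[p]) ^ i) :=
    (hasSum_nat_add_iff' n).mpr hx
  rw [← Ideal.mem_span_singleton, ← norm_le_pow_iff_mem_span_pow]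
  refine (isClosed_le continuous_norm continuous_const).mem_of_tendsto htail.tendsto_sum_nat
    (.of_forall fun m => ?_)
  rw [Set.mem_ofPred_eq, norm_le_pow_iff_mem_span_pow]
  exact Ideal.sum_mem _ fun i _ => Ideal.mem_span_singleton.mpr
    (Dvd.dvd.mul_left (pow_dvd_pow _ (Nat.le_add_left n i)) _)

theorem forall_lt_eq_iff_pow_dvd_sub {a b : ℕ → ℤ_[p]} {x y : ℤ_[p]}
    (ha : ∀ i, a i ^ p = a i) (hb : ∀ i, b i ^ p = b i)
    (hx : HasSum (fun i => a i * (p : ℤ_[p]) ^ i) x)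
    (hy : HasSum (fun i => b i * (p : ℤ_[p]) ^ i) y) (n : ℕ) :
    (∀ i < n, a i = b i) ↔ (p : ℤ_[p]) ^ n ∣ x - y := by
  have hdvd : ∀ m,
      (p : ℤ_[p]) ^ m ∣ x - y - ∑ i ∈ Finset.range m, (a i - b i) * (p : ℤ_[p]) ^ i := fun m => by
    convert dvd_sub (pow_dvd_sub_sum_range hx m) (pow_dvd_sub_sum_range hy m) using 1
    simp only [sub_mul, Finset.sum_sub_distrib]
    ring
  have hzero : ∀ m, (∀ i < m, a i = b i) →
      ∑ i ∈ Finset.range m, (a i - b i) * (p : ℤ_[p]) ^ i = 0 := fun m h =>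
    Finset.sum_eq_zero fun i hi => by
      rw [h i (Finset.mem_range.mp hi), sub_self, zero_mul]
  refine ⟨fun h => by simpa [hzero n h] using hdvd n, fun h => ?_⟩
  induction n with
  | zero => exact fun i hi => absurd hi i.not_lt_zero
  | succ n ih =>
    have hlt := ih ((pow_dvd_pow _ n.le_succ).trans h)
    have hdigit : (p : ℤ_[p]) ^ n * p ∣ (p : ℤ_[p]) ^ n * (a n - b n) := by
      have := dvd_sub h (hdvd (n + 1))
      rwa [sub_sub_cancel, Finset.sum_range_succ, hzero n hlt, zero_add, pow_succ,
        mul_comm _ (_ ^ n)] at this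
    have hp0 : (p : ℤ_[p]) ^ n ≠ 0 := pow_ne_zero _ (Nat.cast_ne_zero.mpr hp.out.ne_zero)
    have := eq_of_pow_eq_self_of_dvd_sub (ha n) (hb n) ((mul_dvd_mul_iff_left hp0).mp hdigit)
    intro i hi
    rcases Nat.lt_succ_iff_lt_or_eq.mp hi with hi | rfl
    exacts [hlt i hi, this]

theorem dense_of_forall_ite_mem (A : Submodule ℤ_[p] C(ℤ_[p], ℤ_[p]))
    (hA : ∀ (n : ℕ) (k : ZMod (p ^ n)), ∃ e ∈ A, ∀ x, e x = if toZModPow n x = k then 1 else 0) :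
    Dense (A : Set C(ℤ_[p], ℤ_[p])) := by
  refine Metric.dense_iff.mpr fun f ε hε => ?_
  obtain ⟨δ, hδ, hf⟩ := f.uniform_continuity (ε / 2) (half_pos hε)
  obtain ⟨n, hn⟩ := exists_pow_neg_lt p hδ
  choose e he hex using hA n
  let rep := Function.surjInv (ZMod.ringHom_surjective (toZModPow (p := p) n))
  have hrep : ∀ k, toZModPow n (rep k) = k := Function.surjInv_eq _
  refine ⟨∑ k, f (rep k) • e k, ?_, sum_mem fun k _ => A.smul_mem _ (he k)⟩
  refine Metric.mem_ball.mpr (lt_of_le_of_lt ((ContinuousMap.dist_le (half_pos hε).le).mpr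
    fun x => ?_) (half_lt_self hε))
  have hx : ‖rep (toZModPow n x) - x‖ < δ :=
    (pow_dvd_sub_iff_norm_sub_le.mp (toZModPow_eq_iff_pow_dvd_sub.mp (hrep _))).trans_lt hn
  simp only [ContinuousMap.coe_sum, ContinuousMap.coe_smul, Finset.sum_apply, Pi.smul_apply, hex,
    smul_eq_mul, mul_ite, mul_one, mul_zero, Finset.sum_ite_eq, Finset.mem_univ, if_true]
  exact (hf (by rwa [dist_eq_norm])).le

end PadicInt

/-- The ring homomorphism `π : ℤ_p[b_0, b_1, …]^∧_p → Maps_cts(ℤ_p, ℤ_p)` determined by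
`b_i ↦ α_i` (the `i`-th Teichmüller digit function, characterized by `α_i(a)^p = α_i(a)` and
`a = ∑_i α_i(a) pⁱ`) and continuity is surjective.  Since the source is the `p`-adic
completion of the polynomial ring, this is expressed by saying that the evaluation map
from the (uncompleted) polynomial ring has dense range in `C(ℤ_p, ℤ_p)`; moreover
`π(b_i) ≡ α_i (mod p)`. -/
theorem stmt_11 (p : ℕ) [Fact p.Prime]
    (α : ℕ → C(ℤ_[p], ℤ_[p]))
    (hpow : ∀ (i : ℕ) (a : ℤ_[p]), (α i a) ^ p = α i a)
    (hsum : ∀ a : ℤ_[p], HasSum (fun i : ℕ => α i a * (p : ℤ_[p]) ^ i) a) :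
    DenseRange
        ⇑(MvPolynomial.aeval α : MvPolynomial ℕ ℤ_[p] →ₐ[ℤ_[p]] C(ℤ_[p], ℤ_[p])) ∧
      ∀ i : ℕ,
        (MvPolynomial.aeval α : MvPolynomial ℕ ℤ_[p] →ₐ[ℤ_[p]] C(ℤ_[p], ℤ_[p])) (X i) - α i ∈
          Ideal.span {(p : C(ℤ_[p], ℤ_[p]))} := by
  refine ⟨?_, fun i => by simp [aeval_X]⟩
  rw [DenseRange, ← AlgHom.coe_range]
  refine PadicInt.dense_of_forall_ite_mem (aeval α).range.toSubmodule fun n k => ?_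
  obtain ⟨y, rfl⟩ := ZMod.ringHom_surjective (PadicInt.toZModPow n) k
  obtain ⟨e, he, hex⟩ := (aeval α).range.exists_mem_apply_eq_ite_forall_eq
    PadicInt.isUnit_sub_of_mem_teichmullerSet
    (Finset.range n) (fun i => ⟨X i, aeval_X α i⟩)
    (fun i x => PadicInt.mem_teichmullerSet.mpr (hpow i x)) (fun i => α i y)
  refine ⟨e, he, fun x => ?_⟩
  simp only [hex, Finset.mem_range, PadicInt.forall_lt_eq_iff_pow_dvd_sub (hpow · x)
    (hpow · y) (hsum x) (hsum y), PadicInt.toZModPow_eq_iff_pow_dvd_sub]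
end

section
/- Let ℓ, f, f̄ be elements of a p-torsion-free p-complete θ-algebra satisfying ψ^p(ℓ) − ℓ = f − f̄. Then the θ-subalgebra generated by ℓ over ℤ_p[f, f̄] maps onto the quotient 𝕋(f, f̄, ℓ)/(ψ^p(ℓ) − ℓ − f + f̄), and this quotient is, as a ring, the p-completed polynomial ring on f, ℓ and the iterates θ^n(ℓ) for n ≥ 1 — equivalently, it is abstractly a free θ-algebra on two generators. -/
open MvPolynomial

namespace Stmt14Aux

variable (p : ℕ) [Fact p.Prime]

noncomputable def psi2 : MvPolynomial (Fin 2 × ℕ) ℤ_[p] →ₐ[ℤ_[p]] MvPolynomial (Fin 2 × ℕ) ℤ_[p] :=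
  aeval (fun v => X v ^ p + (p : MvPolynomial (Fin 2 × ℕ) ℤ_[p]) * X (v.1, v.2 + 1))

lemma psi2_X (v : Fin 2 × ℕ) :
    psi2 p (X v) = X v ^ p + (p : MvPolynomial (Fin 2 × ℕ) ℤ_[p]) * X (v.1, v.2 + 1) :=
  aeval_X _ v

lemma dvd_psi2_sub_pow (q : MvPolynomial (Fin 2 × ℕ) ℤ_[p]) :
    (p : MvPolynomial (Fin 2 × ℕ) ℤ_[p]) ∣ psi2 p q - q ^ p := by
  have hp : p.Prime := Fact.out
  set π : MvPolynomial (Fin 2 × ℕ) ℤ_[p] →+* MvPolynomial (Fin 2 × ℕ) (ZMod p) :=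
    (MvPolynomial.map (PadicInt.toZMod (p := p))) with hπ
  have H : ∀ q : MvPolynomial (Fin 2 × ℕ) ℤ_[p], π (psi2 p q) = (π q) ^ p := by
    intro q
    induction q using MvPolynomial.induction_on with
    | C a =>
      have h1 : psi2 p (C a) = C a := by
        simpa using (psi2 p).commutes a
      rw [h1, hπ]
      simp only [map_C]
      rw [← map_pow, ZMod.pow_card]
    | add q r hq hr =>
      rw [map_add, map_add, map_add, hq, hr, add_pow_char]
    | mul_X q v hq =>
      rw [map_mul, map_mul, hq, psi2_X, map_add, map_mul, map_pow]
      rw [show (π (p : MvPolynomial (Fin 2 × ℕ) ℤ_[p]) : MvPolynomial (Fin 2 × ℕ) (ZMod p)) = 0 by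
        rw [map_natCast]; exact CharP.cast_eq_zero _ p]
      rw [zero_mul, add_zero, map_mul, mul_pow]
  have h0 : π (psi2 p q - q ^ p) = 0 := by
    rw [map_sub, H, map_pow, sub_self]
  have : (C (p : ℤ_[p]) : MvPolynomial (Fin 2 × ℕ) ℤ_[p]) ∣ psi2 p q - q ^ p := by
    rw [C_dvd_iff_dvd_coeff]
    intro i
    have : PadicInt.toZMod (coeff i (psi2 p q - q ^ p)) = 0 := by
      have h2 := congrArg (coeff i) h0
      rwa [hπ, coeff_map, coeff_zero] at h2
    have hm : coeff i (psi2 p q - q ^ p) ∈ RingHom.ker (PadicInt.toZMod : ℤ_[p] →+* ZMod p) := this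
    rw [PadicInt.ker_toZMod, PadicInt.maximalIdeal_eq_span_p, Ideal.mem_span_singleton] at hm
    exact hm
  simpa using this

noncomputable def bseq : ℕ → MvPolynomial (Fin 2 × ℕ) ℤ_[p]
  | 0 => X ((0 : Fin 2), 0) + X ((1 : Fin 2), 0) - psi2 p (X ((1 : Fin 2), 0))
  | n + 1 => (dvd_psi2_sub_pow p (bseq n)).choose

lemma bseq_zero :
    bseq p 0 = X ((0 : Fin 2), 0) + X ((1 : Fin 2), 0) - psi2 p (X ((1 : Fin 2), 0)) := rfl

lemma bseq_succ (n : ℕ) :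
    (p : MvPolynomial (Fin 2 × ℕ) ℤ_[p]) * bseq p (n + 1) = psi2 p (bseq p n) - bseq p n ^ p :=
  ((dvd_psi2_sub_pow p (bseq p n)).choose_spec).symm

noncomputable def phi : MvPolynomial (Fin 3 × ℕ) ℤ_[p] →ₐ[ℤ_[p]] MvPolynomial (Fin 2 × ℕ) ℤ_[p] :=
  aeval (fun v : Fin 3 × ℕ =>
    if v.1 = 0 then X ((0 : Fin 2), v.2) else if v.1 = 1 then bseq p v.2 else X ((1 : Fin 2), v.2))

lemma phi_X0 (n : ℕ) : phi p (X ((0 : Fin 3), n)) = X ((0 : Fin 2), n) := by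
  rw [phi, aeval_X]; simp

lemma phi_X1 (n : ℕ) : phi p (X ((1 : Fin 3), n)) = bseq p n := by
  rw [phi, aeval_X]; rw [if_neg (show ¬(1:Fin 3) = 0 by decide), if_pos rfl]

lemma phi_X2 (n : ℕ) : phi p (X ((2 : Fin 3), n)) = X ((1 : Fin 2), n) := by
  rw [phi, aeval_X]; rw [if_neg (show ¬(2:Fin 3) = 0 by decide), if_neg (show ¬(2:Fin 3) = 1 by decide)]

noncomputable def sS : MvPolynomial (Fin 2 × ℕ) ℤ_[p] →ₐ[ℤ_[p]] MvPolynomial (Fin 3 × ℕ) ℤ_[p] :=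
  aeval (fun v : Fin 2 × ℕ => if v.1 = 0 then X ((0 : Fin 3), v.2) else X ((2 : Fin 3), v.2))

lemma sS_X0 (n : ℕ) : sS p (X ((0 : Fin 2), n)) = X ((0 : Fin 3), n) := by
  rw [sS, aeval_X]; simp

lemma sS_X1 (n : ℕ) : sS p (X ((1 : Fin 2), n)) = X ((2 : Fin 3), n) := by
  rw [sS, aeval_X]; rw [if_neg (show ¬(1:Fin 2) = 0 by decide)]

lemma phi_C (a : ℤ_[p]) : phi p (C a) = C a := by
  rw [phi, aeval_C, algebraMap_eq]

lemma sS_C (a : ℤ_[p]) : sS p (C a) = C a := by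
  rw [sS, aeval_C, algebraMap_eq]

end Stmt14Aux

open Stmt14Aux

/-- Model the free θ-algebra `𝕋(f, f̄, ℓ)` on three generators over `ℤ_p` as the polynomial
ring `A = ℤ_p[(g, n) : g ∈ {f, f̄, ℓ}, n ∈ ℕ]`, where the variable `X (g, n)` represents
`θⁿ(g)` (indices `0, 1, 2` of `Fin 3` corresponding to `f, f̄, ℓ`), with Frobenius lift
`ψ(x) = x^p + p·θ(x)` on generators, and `θ = th` the associated θ-operation (uniquely
determined, since `A` is `p`-torsion-free, by `p · th q = ψ(q) − q^p`).  Let `J` be the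
θ-ideal generated by the relation `r = ψ^p(ℓ) − ℓ − f + f̄` (the smallest ideal containing
`r` and stable under `th`).  Then the quotient `𝕋(f, f̄, ℓ)/(ψ^p(ℓ) − ℓ − f + f̄)` is, as a
ring, the polynomial ring on the θ-iterates of `f` and of `ℓ` — i.e. it is abstractly a free
θ-algebra on two generators: there is a ring isomorphism to `ℤ_p[(g, n) : g ∈ {f, ℓ}, n ∈ ℕ]`
sending the class of `θⁿ(f)` to `X (0, n)` and the class of `θⁿ(ℓ)` to `X (1, n)`. -/
theorem stmt_14 (p : ℕ) [Fact p.Prime]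
    (ψ : MvPolynomial (Fin 3 × ℕ) ℤ_[p] →ₐ[ℤ_[p]] MvPolynomial (Fin 3 × ℕ) ℤ_[p])
    (hψ : ∀ v : Fin 3 × ℕ, ψ (X v) = X v ^ p + (p : MvPolynomial (Fin 3 × ℕ) ℤ_[p]) * X (v.1, v.2 + 1))
    (th : MvPolynomial (Fin 3 × ℕ) ℤ_[p] → MvPolynomial (Fin 3 × ℕ) ℤ_[p])
    (hth : ∀ q, (p : MvPolynomial (Fin 3 × ℕ) ℤ_[p]) * th q = ψ q - q ^ p)
    (J : Ideal (MvPolynomial (Fin 3 × ℕ) ℤ_[p]))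
    (hJr : ψ (X ((2 : Fin 3), 0)) - X ((2 : Fin 3), 0) - X ((0 : Fin 3), 0) + X ((1 : Fin 3), 0) ∈ J)
    (hJth : ∀ q ∈ J, th q ∈ J)
    (hJmin : ∀ I : Ideal (MvPolynomial (Fin 3 × ℕ) ℤ_[p]),
      (ψ (X ((2 : Fin 3), 0)) - X ((2 : Fin 3), 0) - X ((0 : Fin 3), 0) + X ((1 : Fin 3), 0) ∈ I) →
      (∀ q ∈ I, th q ∈ I) → J ≤ I) :
    ∃ e : (MvPolynomial (Fin 3 × ℕ) ℤ_[p] ⧸ J) ≃+* MvPolynomial (Fin 2 × ℕ) ℤ_[p],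
      (∀ n : ℕ, e (Ideal.Quotient.mk J (X ((0 : Fin 3), n))) = X ((0 : Fin 2), n)) ∧
      (∀ n : ℕ, e (Ideal.Quotient.mk J (X ((2 : Fin 3), n))) = X ((1 : Fin 2), n)) := by
  have hp : p.Prime := Fact.out
  have hp3 : (p : MvPolynomial (Fin 3 × ℕ) ℤ_[p]) ≠ 0 :=
    Nat.cast_ne_zero.mpr hp.ne_zero
  have hp2 : (p : MvPolynomial (Fin 2 × ℕ) ℤ_[p]) ≠ 0 :=
    Nat.cast_ne_zero.mpr hp.ne_zero
  have cancel3 : ∀ a b : MvPolynomial (Fin 3 × ℕ) ℤ_[p],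
      (p : MvPolynomial (Fin 3 × ℕ) ℤ_[p]) * a = (p : MvPolynomial (Fin 3 × ℕ) ℤ_[p]) * b → a = b :=
    fun a b h => mul_left_cancel₀ hp3 h
  have cancel2 : ∀ a b : MvPolynomial (Fin 2 × ℕ) ℤ_[p],
      (p : MvPolynomial (Fin 2 × ℕ) ℤ_[p]) * a = (p : MvPolynomial (Fin 2 × ℕ) ℤ_[p]) * b → a = b :=
    fun a b h => mul_left_cancel₀ hp2 h
  have th_X : ∀ v : Fin 3 × ℕ, th (X v) = X (v.1, v.2 + 1) := by
    intro v
    apply cancel3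
    rw [hth, hψ]
    ring
  -- φ commutes with the Frobenius lifts
  have hcomm : ∀ q, phi p (ψ q) = psi2 p (phi p q) := by
    have h : (phi p).comp ψ = (psi2 p).comp (phi p) := by
      apply MvPolynomial.algHom_ext
      rintro ⟨i, n⟩
      fin_cases i
      · show phi p (ψ (X ((0 : Fin 3), n))) = psi2 p (phi p (X ((0 : Fin 3), n)))
        rw [hψ, phi_X0, psi2_X]
        simp only [map_add, map_mul, map_pow, map_natCast, phi_X0]
      · show phi p (ψ (X ((1 : Fin 3), n))) = psi2 p (phi p (X ((1 : Fin 3), n)))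
        rw [hψ, phi_X1]
        simp only [map_add, map_mul, map_pow, map_natCast, phi_X1]
        linear_combination bseq_succ p n
      · show phi p (ψ (X ((2 : Fin 3), n))) = psi2 p (phi p (X ((2 : Fin 3), n)))
        rw [hψ, phi_X2, psi2_X]
        simp only [map_add, map_mul, map_pow, map_natCast, phi_X2]
    intro q
    exact congrFun (congrArg DFunLike.coe h) q
  have hscomm : ∀ q, sS p (psi2 p q) = ψ (sS p q) := by
    have h : (sS p).comp (psi2 p) = ψ.comp (sS p) := by
      apply MvPolynomial.algHom_ext
      rintro ⟨i, n⟩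
      fin_cases i
      · show sS p (psi2 p (X ((0 : Fin 2), n))) = ψ (sS p (X ((0 : Fin 2), n)))
        rw [psi2_X, sS_X0, hψ]
        simp only [map_add, map_mul, map_pow, map_natCast, sS_X0]
      · show sS p (psi2 p (X ((1 : Fin 2), n))) = ψ (sS p (X ((1 : Fin 2), n)))
        rw [psi2_X, sS_X1, hψ]
        simp only [map_add, map_mul, map_pow, map_natCast, sS_X1]
    intro q
    exact congrFun (congrArg DFunLike.coe h) q
  -- the kernel of φ is a θ-ideal containing the relation, so contains J
  have hker : ∀ q, phi p q = 0 → phi p (th q) = 0 := by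
    intro q hq
    apply cancel2 _ 0
    rw [mul_zero]
    have h1 : (p : MvPolynomial (Fin 2 × ℕ) ℤ_[p]) * phi p (th q)
        = phi p (ψ q) - (phi p q) ^ p := by
      rw [← map_natCast (phi p) p, ← map_mul, hth, map_sub, map_pow]
    rw [h1, hcomm, hq, map_zero, zero_pow hp.ne_zero, sub_zero]
  have hphir : phi p (ψ (X ((2 : Fin 3), 0)) - X ((2 : Fin 3), 0)
      - X ((0 : Fin 3), 0) + X ((1 : Fin 3), 0)) = 0 := by
    rw [map_add, map_sub, map_sub, hcomm, phi_X2, phi_X0, phi_X1, bseq_zero]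
    ring
  have hJK : J ≤ RingHom.ker ((phi p) : MvPolynomial (Fin 3 × ℕ) ℤ_[p] →+* MvPolynomial (Fin 2 × ℕ) ℤ_[p]) := by
    apply hJmin
    · exact hphir
    · intro q hq
      exact hker q hq
  -- the descended map and its inverse
  let phibar : (MvPolynomial (Fin 3 × ℕ) ℤ_[p] ⧸ J) →+* MvPolynomial (Fin 2 × ℕ) ℤ_[p] :=
    Ideal.Quotient.lift J ((phi p) : MvPolynomial (Fin 3 × ℕ) ℤ_[p] →+* MvPolynomial (Fin 2 × ℕ) ℤ_[p])
      (fun a ha => hJK ha)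
  let sbar : MvPolynomial (Fin 2 × ℕ) ℤ_[p] →+* (MvPolynomial (Fin 3 × ℕ) ℤ_[p] ⧸ J) :=
    (Ideal.Quotient.mk J).comp ((sS p) : MvPolynomial (Fin 2 × ℕ) ℤ_[p] →+* MvPolynomial (Fin 3 × ℕ) ℤ_[p])
  -- the key congruence s(bseq n) ≡ X (1, n) mod J
  have key : ∀ n : ℕ, sS p (bseq p n) - X ((1 : Fin 3), n) ∈ J := by
    intro n
    induction n with
    | zero =>
      have h0 : sS p (bseq p 0) - X ((1 : Fin 3), 0) =
          -(ψ (X ((2 : Fin 3), 0)) - X ((2 : Fin 3), 0) - X ((0 : Fin 3), 0) + X ((1 : Fin 3), 0)) := by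
        rw [bseq_zero, map_sub, map_add, sS_X0, sS_X1, hscomm, sS_X1]
        ring
      rw [h0]
      exact neg_mem hJr
    | succ n ih =>
      set x : MvPolynomial (Fin 3 × ℕ) ℤ_[p] := X ((1 : Fin 3), n) with hx_def
      set j := sS p (bseq p n) - x with hj_def
      have hj : j ∈ J := ih
      have hsb : sS p (bseq p n) = x + j := by rw [hj_def]; ring
      have hstep : sS p (bseq p (n + 1)) = th (x + j) := by
        apply cancel3
        rw [hth, ← hsb, ← hscomm, ← map_pow, ← map_sub, ← bseq_succ, map_mul, map_natCast]
      have hbin := add_pow_prime_eq' hp x j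
      set m := ∑ k ∈ Finset.Ioo 0 p,
          x ^ k * j ^ (p - k) * ((p.choose k / p : ℕ) : MvPolynomial (Fin 3 × ℕ) ℤ_[p]) with hm_def
      have hm : m ∈ J := by
        rw [hm_def]
        apply Ideal.sum_mem
        intro k hk
        rw [Finset.mem_Ioo] at hk
        have hpk : p - k = (p - k - 1) + 1 := by omega
        have h1 : j ^ (p - k) ∈ J := by
          rw [hpk, pow_succ]
          exact J.mul_mem_left _ hj
        exact J.mul_mem_right _ (J.mul_mem_left _ h1)
      have hth_add : th (x + j) = th x + th j - m := by
        apply cancel3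
        linear_combination hth (x + j) - hth x - hth j - hbin + map_add ψ x j
      have hthx : th x = X ((1 : Fin 3), n + 1) := th_X ((1 : Fin 3), n)
      rw [hstep, hth_add, hthx]
      have h2 : X ((1 : Fin 3), n + 1) + th j - m - X ((1 : Fin 3), n + 1) = th j - m := by ring
      rw [h2]
      exact sub_mem (hJth j hj) hm
  -- the two compositions are the identity
  have h1 : sbar.comp phibar = RingHom.id (MvPolynomial (Fin 3 × ℕ) ℤ_[p] ⧸ J) := by
    apply Ideal.Quotient.ringHom_ext
    apply MvPolynomial.ringHom_ext
    · intro a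
      show sbar (phibar (Ideal.Quotient.mk J (C a))) = Ideal.Quotient.mk J (C a)
      show (Ideal.Quotient.mk J) (sS p (phi p (C a))) = Ideal.Quotient.mk J (C a)
      rw [phi_C, sS_C]
    · rintro ⟨i, n⟩
      fin_cases i
      · show (Ideal.Quotient.mk J) (sS p (phi p (X ((0 : Fin 3), n)))) = Ideal.Quotient.mk J (X ((0 : Fin 3), n))
        rw [phi_X0, sS_X0]
      · show (Ideal.Quotient.mk J) (sS p (phi p (X ((1 : Fin 3), n)))) = Ideal.Quotient.mk J (X ((1 : Fin 3), n))
        rw [phi_X1]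
        rw [Ideal.Quotient.mk_eq_mk_iff_sub_mem]
        exact key n
      · show (Ideal.Quotient.mk J) (sS p (phi p (X ((2 : Fin 3), n)))) = Ideal.Quotient.mk J (X ((2 : Fin 3), n))
        rw [phi_X2, sS_X1]
  have h2 : phibar.comp sbar = RingHom.id (MvPolynomial (Fin 2 × ℕ) ℤ_[p]) := by
    apply MvPolynomial.ringHom_ext
    · intro a
      show phibar ((Ideal.Quotient.mk J) (sS p (C a))) = C a
      show phi p (sS p (C a)) = C a
      rw [sS_C, phi_C]
    · rintro ⟨i, n⟩
      fin_cases i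
      · show phi p (sS p (X ((0 : Fin 2), n))) = X ((0 : Fin 2), n)
        rw [sS_X0, phi_X0]
      · show phi p (sS p (X ((1 : Fin 2), n))) = X ((1 : Fin 2), n)
        rw [sS_X1, phi_X2]
  refine ⟨RingEquiv.ofRingHom phibar sbar h2 h1, ?_, ?_⟩
  · intro n
    show phibar (Ideal.Quotient.mk J (X ((0 : Fin 3), n))) = X ((0 : Fin 2), n)
    show phi p (X ((0 : Fin 3), n)) = X ((0 : Fin 2), n)
    exact phi_X0 p n
  · intro n
    show phibar (Ideal.Quotient.mk J (X ((2 : Fin 3), n))) = X ((1 : Fin 2), n)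
    show phi p (X ((2 : Fin 3), n)) = X ((1 : Fin 2), n)
    exact phi_X2 p n
end

section
/- The free θ-algebra 𝕋(b) on one generator, with the Hopf algebra structure where b is primitive, is isomorphic as a Hopf algebra (and as a θ-algebra) to the Hopf algebra 𝕎 = ℤ_p[a_0, a_1, …] representing the additive group of p-typical Witt vectors, via θ_n(b) ↦ a_n; under this isomorphism ψ^{p^n}(b) corresponds to the n-th Witt (ghost) polynomial w_n = a_0^{p^n} + p a_1^{p^{n−1}} + ⋯ + p^n a_n. -/
open MvPolynomial TensorProduct

section Aux

variable {p : ℕ} [Fact p.Prime]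

private lemma aux_pow_cancel {B : Type*} [CommRing B]
    (hB : ∀ x : B, (p : B) * x = 0 → x = 0) :
    ∀ (n : ℕ) (x : B), (p : B) ^ n * x = 0 → x = 0 := by
  intro n
  induction n with
  | zero => intro x hx; simpa using hx
  | succ n ih =>
    intro x hx
    apply hB
    apply ih
    rw [← mul_assoc, mul_comm ((p : B) ^ n) (p : B), ← pow_succ']
    exact hx

/-- An `ℤ_p`-algebra hom applied to a Witt polynomial, expressed as an `ℤ`-aeval. -/
private lemma aux_aeval_witt {B : Type*} [CommRing B] [Algebra ℤ_[p] B]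
    (f : MvPolynomial ℕ ℤ_[p] →ₐ[ℤ_[p]] B) (n : ℕ) :
    (MvPolynomial.aeval (fun m => f (X m))) (wittPolynomial p ℤ n)
      = f (wittPolynomial p ℤ_[p] n) := by
  rw [aeval_wittPolynomial, wittPolynomial_eq_sum_C_mul_X_pow, map_sum]
  refine Finset.sum_congr rfl fun i _ => ?_
  simp only [map_mul, map_pow, algHom_C, map_natCast]

/-- Two `ℤ_p`-algebra maps out of `ℤ_p[X₀, X₁, …]` into a `p`-torsion-free algebra that agree
on all Witt polynomials agree on all variables (and hence are equal). -/
private lemma aux_ghost_determines {B : Type*} [CommRing B] [Algebra ℤ_[p] B]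
    (hB : ∀ x : B, (p : B) * x = 0 → x = 0)
    (f g : MvPolynomial ℕ ℤ_[p] →ₐ[ℤ_[p]] B)
    (h : ∀ n, f (wittPolynomial p ℤ_[p] n) = g (wittPolynomial p ℤ_[p] n)) :
    ∀ n, f (X n) = g (X n) := by
  intro n
  induction n using Nat.strong_induction_on with
  | _ n ih =>
    have hw := h n
    rw [wittPolynomial_eq_sum_C_mul_X_pow] at hw
    simp only [Finset.sum_range_succ, Nat.sub_self, pow_zero, pow_one, map_add, map_sum,
      map_mul, map_pow, algHom_C, map_natCast] at hw
    have hsum : (∑ i ∈ Finset.range n, (p : B) ^ i * f (X i) ^ p ^ (n - i))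
        = ∑ i ∈ Finset.range n, (p : B) ^ i * g (X i) ^ p ^ (n - i) :=
      Finset.sum_congr rfl fun i hi => by rw [ih i (Finset.mem_range.mp hi)]
    rw [hsum] at hw
    have hcancel : (p : B) ^ n * (f (X n) - g (X n)) = 0 := by
      rw [mul_sub, sub_eq_zero]
      exact add_left_cancel hw
    exact sub_eq_zero.mp (aux_pow_cancel hB n _ hcancel)

end Aux

/-- Model the free θ-algebra `𝕋(b)` on one generator as the polynomial ring
`ℤ_p[b_0, b_1, …]` with `θ_n(b) = X n` and with Frobenius lift `ψ` shifting the Witt (ghost)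
polynomials, and let `Δ` be its Hopf-algebra comultiplication: the algebra map commuting with
`ψ ⊗ ψ` with `b = X 0` primitive.  Then `𝕋(b)` is isomorphic, as a Hopf algebra and as a
θ-algebra, to the Hopf algebra `𝕎 = ℤ_p[a_0, a_1, …]` representing the additive group of
`p`-typical Witt vectors, via `θ_n(b) ↦ a_n`: there is an algebra isomorphism sending
`θ_n(b)` to `a_n` (here the identity of the polynomial model), under which `ψ^{pⁿ}(b)`
corresponds to the `n`-th ghost polynomial `w_n = a_0^{pⁿ} + p a_1^{p^{n−1}} + ⋯ + pⁿ aₙ`,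
and the comultiplication corresponds to Witt-vector addition: `Δ(a_n)` is the `n`-th Witt
addition polynomial in the variables `a_i ⊗ 1` and `1 ⊗ a_i`. -/
theorem stmt_16 (p : ℕ) [Fact p.Prime]
    (ψ : MvPolynomial ℕ ℤ_[p] →ₐ[ℤ_[p]] MvPolynomial ℕ ℤ_[p])
    (hψ : ∀ n : ℕ, ψ (wittPolynomial p ℤ_[p] n) = wittPolynomial p ℤ_[p] (n + 1))
    (Δ : MvPolynomial ℕ ℤ_[p] →ₐ[ℤ_[p]] MvPolynomial ℕ ℤ_[p] ⊗[ℤ_[p]] MvPolynomial ℕ ℤ_[p])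
    (hcomm : ∀ q : MvPolynomial ℕ ℤ_[p], Δ (ψ q) = Algebra.TensorProduct.map ψ ψ (Δ q))
    (hprim : Δ (X 0) = (X 0) ⊗ₜ[ℤ_[p]] 1 + 1 ⊗ₜ[ℤ_[p]] (X 0)) :
    ∃ e : MvPolynomial ℕ ℤ_[p] ≃ₐ[ℤ_[p]] MvPolynomial ℕ ℤ_[p],
      (∀ n : ℕ, e (X n) = X n) ∧
      (∀ n : ℕ, e ((⇑ψ)^[n] (X 0)) = wittPolynomial p ℤ_[p] n) ∧
      (∀ n : ℕ,
        Δ (X n) =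
          MvPolynomial.aeval
            (fun v : Fin 2 × ℕ =>
              if v.1 = 0 then (X v.2 : MvPolynomial ℕ ℤ_[p]) ⊗ₜ[ℤ_[p]] (1 : MvPolynomial ℕ ℤ_[p])
              else (1 : MvPolynomial ℕ ℤ_[p]) ⊗ₜ[ℤ_[p]] (X v.2 : MvPolynomial ℕ ℤ_[p]))
            (WittVector.wittAdd p n)) := by
  classical
  set A := MvPolynomial ℕ ℤ_[p]
  -- iterates of ψ on X 0 are the Witt polynomials
  have hiter : ∀ n : ℕ, (⇑ψ)^[n] (X 0) = wittPolynomial p ℤ_[p] n := by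
    intro n
    induction n with
    | zero => simp [wittPolynomial_zero]
    | succ n ih =>
      rw [Function.iterate_succ_apply', ih, ← hψ n]
  -- the target tensor algebra has no p-torsion
  have hB : ∀ x : A ⊗[ℤ_[p]] A, (p : A ⊗[ℤ_[p]] A) * x = 0 → x = 0 := by
    intro x hx
    let e2 := (MvPolynomial.scalarRTensorAlgEquiv :
      MvPolynomial ℕ ℤ_[p] ⊗[ℤ_[p]] (MvPolynomial ℕ ℤ_[p]) ≃ₐ[MvPolynomial ℕ ℤ_[p]]
        MvPolynomial ℕ (MvPolynomial ℕ ℤ_[p]))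
    apply e2.injective
    rw [map_zero]
    have h2 : (p : MvPolynomial ℕ (MvPolynomial ℕ ℤ_[p])) * e2 x = 0 := by
      rw [← map_natCast e2 p, ← map_mul, hx, map_zero]
    have hp0 : (p : MvPolynomial ℕ (MvPolynomial ℕ ℤ_[p])) ≠ 0 :=
      Nat.cast_ne_zero.mpr (Fact.out (p := p.Prime)).ne_zero
    rcases mul_eq_zero.mp h2 with h | h
    · exact absurd h hp0
    · exact h
  -- Δ of Witt polynomials
  have hΔw : ∀ n, Δ (wittPolynomial p ℤ_[p] n)
      = wittPolynomial p ℤ_[p] n ⊗ₜ[ℤ_[p]] 1 + 1 ⊗ₜ[ℤ_[p]] wittPolynomial p ℤ_[p] n := by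
    intro n
    induction n with
    | zero => rw [wittPolynomial_zero]; exact hprim
    | succ n ih =>
      rw [← hψ n, hcomm, ih, map_add, Algebra.TensorProduct.map_tmul,
        Algebra.TensorProduct.map_tmul, map_one, hψ n]
  -- the comparison map coming from Witt addition polynomials
  set g : Fin 2 × ℕ → A ⊗[ℤ_[p]] A := fun v =>
    if v.1 = 0 then (X v.2 : A) ⊗ₜ[ℤ_[p]] (1 : A) else (1 : A) ⊗ₜ[ℤ_[p]] (X v.2 : A) with hg
  set Δ' : A →ₐ[ℤ_[p]] A ⊗[ℤ_[p]] A :=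
    MvPolynomial.aeval (fun n => MvPolynomial.aeval g (WittVector.wittAdd p n)) with hΔ'
  have hg0 : (g ∘ Prod.mk (0 : Fin 2)) = fun m =>
      (Algebra.TensorProduct.includeLeft : A →ₐ[ℤ_[p]] A ⊗[ℤ_[p]] A) (X m) := by
    funext m; simp [hg]
  have hg1 : (g ∘ Prod.mk (1 : Fin 2)) = fun m =>
      (Algebra.TensorProduct.includeRight : A →ₐ[ℤ_[p]] A ⊗[ℤ_[p]] A) (X m) := by
    funext m; simp [hg]
  have hΔ'w : ∀ n, Δ' (wittPolynomial p ℤ_[p] n)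
      = wittPolynomial p ℤ_[p] n ⊗ₜ[ℤ_[p]] 1 + 1 ⊗ₜ[ℤ_[p]] wittPolynomial p ℤ_[p] n := by
    intro n
    have key : bind₁ (WittVector.wittAdd p) (wittPolynomial p ℤ n)
        = rename (Prod.mk (0 : Fin 2)) (wittPolynomial p ℤ n)
          + rename (Prod.mk (1 : Fin 2)) (wittPolynomial p ℤ n) := by
      rw [show WittVector.wittAdd p = wittStructureInt p (X 0 + X 1) from rfl,
        wittStructureInt_prop, map_add, bind₁_X_right, bind₁_X_right]
    calc Δ' (wittPolynomial p ℤ_[p] n)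
        = Δ' (MvPolynomial.map (algebraMap ℤ ℤ_[p]) (wittPolynomial p ℤ n)) := by
          rw [algebraMap_int_eq, map_wittPolynomial]
      _ = MvPolynomial.aeval (fun n => MvPolynomial.aeval g (WittVector.wittAdd p n))
            (wittPolynomial p ℤ n) := by
          rw [hΔ', aeval_map_algebraMap]
      _ = MvPolynomial.aeval g (bind₁ (WittVector.wittAdd p) (wittPolynomial p ℤ n)) := by
          rw [aeval_bind₁]
      _ = MvPolynomial.aeval (g ∘ Prod.mk (0 : Fin 2)) (wittPolynomial p ℤ n)
            + MvPolynomial.aeval (g ∘ Prod.mk (1 : Fin 2)) (wittPolynomial p ℤ n) := by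
          rw [key, map_add, aeval_rename, aeval_rename]
      _ = wittPolynomial p ℤ_[p] n ⊗ₜ[ℤ_[p]] 1 + 1 ⊗ₜ[ℤ_[p]] wittPolynomial p ℤ_[p] n := by
          rw [hg0, hg1]
          erw [aux_aeval_witt (p := p) (Algebra.TensorProduct.includeLeft : A →ₐ[ℤ_[p]] A ⊗[ℤ_[p]] A) n,
              aux_aeval_witt (p := p) (Algebra.TensorProduct.includeRight : A →ₐ[ℤ_[p]] A ⊗[ℤ_[p]] A) n]
          rw [Algebra.TensorProduct.includeLeft_apply, Algebra.TensorProduct.includeRight_apply]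
  -- conclude Δ = Δ' on variables
  have hXn : ∀ n, Δ (X n) = Δ' (X n) :=
    aux_ghost_determines hB Δ Δ' (fun n => (hΔw n).trans (hΔ'w n).symm)
  refine ⟨AlgEquiv.refl, fun n => rfl, fun n => by rw [AlgEquiv.coe_refl, id_eq, hiter n], ?_⟩
  intro n
  rw [hXn n, hΔ', aeval_X]
end

section
/- On a torsion-free p-complete λ-ring R whose Adams operations ψ^k (k prime to p) are all the identity, the λ-operations applied to an element x with ψ^p(x) = x are given by λ^n(x) = C(x, n) (the binomial coefficient); in particular in the λ-ring ℤ_p with all Adams operations the identity, λ^n(x) = C(x,n) for all x ∈ ℤ_p. -/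
/-!
Subtracting the Newton relation of degree `n` from that of degree `n + 1` leaves
`(-1)^n ((x - n) λ^n(x) - (n + 1) λ^{n+1}(x)) = 0`, which is the recurrence
`(n + 1) C(x, n + 1) = (x - n) C(x, n)` of the binomial coefficients.
-/

open Finset

section NewtonRecurrence

variable {R : Type*} [CommRing R]

theorem succ_mul_eq_mul_sub_of_newton {a : ℕ → R} {x : R}
    (hNewton : ∀ n : ℕ, 1 ≤ n →
      (∑ i ∈ range n, (-1 : R) ^ i * a i * x) + (-1 : R) ^ n * n * a n = 0)
    (n : ℕ) : ((n : R) + 1) * a (n + 1) = a n * (x - n) := by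
  have hNewton' : ∀ m : ℕ,
      (∑ i ∈ range m, (-1 : R) ^ i * a i * x) + (-1 : R) ^ m * m * a m = 0 := by
    rintro (_ | m)
    · simp
    · exact hNewton _ m.succ_pos
  have hdiff : (-1 : R) ^ n * (a n * (x - n) - ((n : R) + 1) * a (n + 1)) = 0 := by
    have h := hNewton' (n + 1)
    rw [sum_range_succ] at h
    push_cast at h
    linear_combination h - hNewton' n
  rw [((isUnit_neg_one (α := R)).pow n).mul_right_eq_zero, sub_eq_zero] at hdiff
  exact hdiff.symm

theorem factorial_mul_eq_prod_of_succ_mul_eq {a : ℕ → R} {x : R} (h0 : a 0 = 1)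
    (hrec : ∀ n : ℕ, ((n : R) + 1) * a (n + 1) = a n * (x - n)) (n : ℕ) :
    (n.factorial : R) * a n = ∏ i ∈ range n, (x - (i : R)) := by
  induction n with
  | zero => simp [h0]
  | succ n ih =>
    rw [prod_range_succ, ← ih, Nat.factorial_succ]
    push_cast
    linear_combination (n.factorial : R) * hrec n

end NewtonRecurrence

theorem stmt_17_general (R : Type) [CommRing R]
    (lam : ℕ → R → R)
    (h0 : ∀ y : R, lam 0 y = 1)
    (x : R)
    (hNewton : ∀ n : ℕ, 1 ≤ n →
      (∑ i ∈ Finset.range n, (-1 : R) ^ i * lam i x * x) + (-1 : R) ^ n * n * lam n x = 0) :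
    ∀ n : ℕ, (n.factorial : R) * lam n x = ∏ i ∈ Finset.range n, (x - (i : R)) :=
  factorial_mul_eq_prod_of_succ_mul_eq (h0 x) (succ_mul_eq_mul_sub_of_newton hNewton)

/-- Let `R` be a `p`-torsion-free (`p`-complete) commutative `ℤ_p`-algebra with λ-operations
`lam n`, and let `x ∈ R` be an element on which all Adams operations are the identity: via
Newton's relations (which determine the Adams operations from the λ-operations), this means
`∑_{i=0}^{n-1} (−1)^i λ^i(x)·x + (−1)^n n λ^n(x) = 0` for all `n ≥ 1`.  Then
`λ^n(x) = C(x, n)`, the binomial coefficient, i.e. `n! · λ^n(x) = x(x−1)⋯(x−n+1)`.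
In particular, in the λ-ring `ℤ_p` with all Adams operations the identity (take `R = ℤ_p`),
`λ^n(x) = C(x, n)` for all `x ∈ ℤ_p`. -/
theorem stmt_17 (p : ℕ) [Fact p.Prime] (R : Type) [CommRing R] [Algebra ℤ_[p] R]
    (htf : ∀ y : R, (p : R) * y = 0 → y = 0)
    (lam : ℕ → R → R)
    (h0 : ∀ y : R, lam 0 y = 1)
    (h1 : ∀ y : R, lam 1 y = y)
    (hone : ∀ n : ℕ, 2 ≤ n → lam n 1 = 0)
    (hadd : ∀ (y z : R) (n : ℕ),
      lam n (y + z) = ∑ i ∈ Finset.range (n + 1), lam i y * lam (n - i) z)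
    (x : R)
    (hNewton : ∀ n : ℕ, 1 ≤ n →
      (∑ i ∈ Finset.range n, (-1 : R) ^ i * lam i x * x) + (-1 : R) ^ n * n * lam n x = 0) :
    ∀ n : ℕ, (n.factorial : R) * lam n x = ∏ i ∈ Finset.range n, (x - (i : R)) :=
  stmt_17_general R lam h0 x hNewton
end
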